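/- arXiv:0911.3214 — 12 statements merged into one kernel-verified Lean document; each statement's English description precedes it below -/
import Mathlib

section
/- In the category C of Chu spaces over Σ (with |Σ| ≥ 2) and Chu morphisms, a morphism φ = (φ⁺, φ⁻) is monic if and only if φ⁺ is injective and φ⁻ is surjective. -/
universe u

/-- A Chu space over `S`: objects `A`, attributes `X`, satisfaction `r`. -/
structure ChuSpace (S : Type u) : Type (u+1) where
  A : Type u
  X : Type u
  r : A → X → S

/-- A Chu morphism `(f, g)`. -/
@[ext]
structure ChuHom {S : Type u} (C D : ChuSpace S) : Type u where
  f : C.A → D.A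
  g : D.X → C.X
  comm : ∀ a y, D.r (f a) y = C.r a (g y)

variable {S : Type u}

/-- Composition of Chu morphisms: `ψ.comp φ = ψ ∘ φ`. -/
def ChuHom.comp {C D E : ChuSpace S} (ψ : ChuHom D E) (φ : ChuHom C D) : ChuHom C E where
  f := ψ.f ∘ φ.f
  g := φ.g ∘ ψ.g
  comm := fun a y => by
    simp only [Function.comp_apply]
    rw [ψ.comm, φ.comm]

def ChuHom.idHom (C : ChuSpace S) : ChuHom C C := ⟨id, id, fun _ _ => rfl⟩

/-- `φ` is an isomorphism of Chu spaces. -/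
def ChuIso {C D : ChuSpace S} (φ : ChuHom C D) : Prop :=
  ∃ ψ : ChuHom D C, φ.comp ψ = ChuHom.idHom D ∧ ψ.comp φ = ChuHom.idHom C

/-- No repeated columns. -/
def ChuExtensional (C : ChuSpace S) : Prop :=
  ∀ x y : C.X, (∀ a, C.r a x = C.r a y) → x = y

/-- No repeated rows. -/
def ChuSeparable (C : ChuSpace S) : Prop :=
  ∀ a b : C.A, (∀ x, C.r a x = C.r b x) → a = b

def ChuBiextensional (C : ChuSpace S) : Prop := ChuExtensional C ∧ ChuSeparable C

/-- Discrete: every function `A → S` is realized by a column. -/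
def ChuDiscrete (C : ChuSpace S) : Prop :=
  ∀ f : C.A → S, ∃ x : C.X, ∀ a, C.r a x = f a

/-- `φ` is monic in the full subcategory of Chu spaces satisfying `Obj`. -/
def MonicIn (Obj : ChuSpace S → Prop) {C D : ChuSpace S} (φ : ChuHom C D) : Prop :=
  ∀ (E : ChuSpace S), Obj E → ∀ ψ₁ ψ₂ : ChuHom E C,
    φ.comp ψ₁ = φ.comp ψ₂ → ψ₁ = ψ₂

/-- Monics of the category `C` of Chu spaces: injective forward, surjective backward. -/
def IsMonoC {C D : ChuSpace S} (φ : ChuHom C D) : Prop :=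
  Function.Injective φ.f ∧ Function.Surjective φ.g

/-- Monics of the categories `E` and `B`: injective forward component. -/
def IsMonoE {C D : ChuSpace S} (φ : ChuHom C D) : Prop :=
  Function.Injective φ.f

/-- An ω-sequence of Chu spaces. -/
structure ChuSeq (S : Type u) : Type (u+1) where
  C : ℕ → ChuSpace S
  φ : ∀ i, ChuHom (C i) (C (i+1))

/-- A cocone from the ω-sequence `T` to `C`. -/
structure Cocone (T : ChuSeq S) (C : ChuSpace S) : Type u where
  ψ : ∀ i, ChuHom (T.C i) C
  compat : ∀ i, (ψ (i+1)).comp (T.φ i) = ψ i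

/-- `c` is a colimit of `T` in the subcategory with objects `Obj` and morphisms `Mor`. -/
structure IsColimit (Obj : ChuSpace S → Prop)
    (Mor : ∀ C D : ChuSpace S, ChuHom C D → Prop)
    (T : ChuSeq S) (C : ChuSpace S) (c : Cocone T C) : Prop where
  obj : Obj C
  mor : ∀ i, Mor _ _ (c.ψ i)
  univ : ∀ (C' : ChuSpace S), Obj C' → ∀ (c' : Cocone T C'), (∀ i, Mor _ _ (c'.ψ i)) →
      ∃! μ : ChuHom C C', Mor _ _ μ ∧ ∀ i, μ.comp (c.ψ i) = c'.ψ i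

/-- A finite object in the subcategory `(Obj, Mor)`: every morphism into a colimit of an
ω-sequence factors through some stage. -/
def FiniteObjIn (Obj : ChuSpace S → Prop) (Mor : ∀ C D : ChuSpace S, ChuHom C D → Prop)
    (F : ChuSpace S) : Prop :=
  Obj F ∧ ∀ (T : ChuSeq S), (∀ i, Obj (T.C i)) → (∀ i, Mor _ _ (T.φ i)) →
    ∀ (C : ChuSpace S) (c : Cocone T C), IsColimit Obj Mor T C c →
      ∀ φ : ChuHom F C, Mor _ _ φ →
        ∃ (i : ℕ) (ψ : ChuHom F (T.C i)), Mor _ _ ψ ∧ (c.ψ i).comp ψ = φ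

/-- Strongly finite: a finite object of `iC` with finite object set,
finite and non-empty attribute set. -/
def StronglyFinite (F : ChuSpace S) : Prop :=
  FiniteObjIn (fun _ => True) (fun _ _ φ => IsMonoC φ) F ∧
    Finite F.A ∧ Finite F.X ∧ Nonempty F.X


/-- In the category of all Chu spaces over `S` (`|S| ≥ 2`), a morphism is monic iff
its forward component is injective and its backward component is surjective. -/
theorem stmt3 {S : Type u} (h2 : ∃ σ τ : S, σ ≠ τ) {C D : ChuSpace S} (φ : ChuHom C D) :
    MonicIn (fun _ => True) φ ↔ (Function.Injective φ.f ∧ Function.Surjective φ.g) := by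
  classical
  constructor
  · intro hm
    constructor
    · -- injectivity of φ.f
      intro a₁ a₂ hfa
      let E : ChuSpace S := ⟨PUnit, S, fun _ s => s⟩
      let ψ₁ : ChuHom E C := ⟨fun _ => a₁, fun x => C.r a₁ x, fun _ _ => rfl⟩
      let ψ₂ : ChuHom E C := ⟨fun _ => a₂, fun x => C.r a₂ x, fun _ _ => rfl⟩
      have h : φ.comp ψ₁ = φ.comp ψ₂ := by
        apply ChuHom.ext
        · funext u; exact hfa
        · funext y
          show C.r a₁ (φ.g y) = C.r a₂ (φ.g y)
          rw [← φ.comm, ← φ.comm, hfa]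
      have := hm E trivial ψ₁ ψ₂ h
      exact congrFun (congrArg ChuHom.f this) PUnit.unit
    · -- surjectivity of φ.g
      intro x₀
      by_contra hx
      push_neg at hx
      let E : ChuSpace S := ⟨C.A, C.X ⊕ C.X, fun a x => Sum.elim (C.r a) (C.r a) x⟩
      let ψ₁ : ChuHom E C := ⟨id, Sum.inl, fun _ _ => rfl⟩
      let ψ₂ : ChuHom E C :=
        ⟨id, fun x => if x ∈ Set.range φ.g then Sum.inl x else Sum.inr x, by
          intro a x
          show C.r a x = E.r a _
          by_cases h : x ∈ Set.range φ.g <;> simp [h, E]⟩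
      have h : φ.comp ψ₁ = φ.comp ψ₂ := by
        apply ChuHom.ext
        · rfl
        · funext y
          show Sum.inl (φ.g y) = ψ₂.g (φ.g y)
          have : φ.g y ∈ Set.range φ.g := ⟨y, rfl⟩
          simp only [ψ₂, this, if_pos]
      have := hm E trivial ψ₁ ψ₂ h
      have h0 : ψ₁.g x₀ = ψ₂.g x₀ := by rw [this]
      have hx0 : x₀ ∉ Set.range φ.g := by rintro ⟨y, hy⟩; exact hx y hy
      simp only [ψ₁, ψ₂, hx0, if_neg, not_false_iff] at h0
      exact absurd h0 (by simp)
  · rintro ⟨hinj, hsurj⟩ E _ ψ₁ ψ₂ h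
    apply ChuHom.ext
    · funext a
      apply hinj
      exact congrFun (congrArg ChuHom.f h) a
    · funext x
      obtain ⟨y, rfl⟩ := hsurj x
      exact congrFun (congrArg ChuHom.g h) y
end

section
/- In the category E of extensional Chu spaces over Σ (with |Σ| ≥ 2), a morphism φ is monic if and only if its forward component φ⁺ is injective. -/
universe u

variable {S : Type u}

/-- In the category `E` of extensional Chu spaces over `S` (`|S| ≥ 2`), a morphism is
monic iff its forward component is injective. -/
theorem stmt4 {S : Type u} (h2 : ∃ σ τ : S, σ ≠ τ) {C D : ChuSpace S} (φ : ChuHom C D)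
    (hC : ChuExtensional C) (hD : ChuExtensional D) :
    MonicIn ChuExtensional φ ↔ Function.Injective φ.f := by
  constructor
  · intro hm a b hab
    let E : ChuSpace S := ⟨PUnit, S, fun _ s => s⟩
    have hE : ChuExtensional E := fun x y h => h PUnit.unit
    let ψ₁ : ChuHom E C := ⟨fun _ => a, fun y => C.r a y, fun _ _ => rfl⟩
    let ψ₂ : ChuHom E C := ⟨fun _ => b, fun y => C.r b y, fun _ _ => rfl⟩
    have heq : φ.comp ψ₁ = φ.comp ψ₂ := by
      apply ChuHom.ext
      · funext u; exact hab
      · funext y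
        show C.r a (φ.g y) = C.r b (φ.g y)
        rw [← φ.comm, ← φ.comm, hab]
    have := hm E hE ψ₁ ψ₂ heq
    exact congrFun (congrArg ChuHom.f this) PUnit.unit
  · intro hf E hE ψ₁ ψ₂ heq
    have hff : ψ₁.f = ψ₂.f := by
      funext a
      apply hf
      exact congrFun (congrArg ChuHom.f heq) a
    apply ChuHom.ext hff
    funext x
    apply hE
    intro a
    rw [← ψ₁.comm, ← ψ₂.comm, hff]
end

section
/- In the category B of biextensional Chu spaces over Σ (with |Σ| ≥ 2), a morphism φ is monic if and only if its forward component φ⁺ is injective. -/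
universe u

variable {S : Type u}

/-- In the category `B` of biextensional Chu spaces over `S` (`|S| ≥ 2`), a morphism is
monic iff its forward component is injective. -/
theorem stmt5 {S : Type u} (h2 : ∃ σ τ : S, σ ≠ τ) {C D : ChuSpace S} (φ : ChuHom C D)
    (hC : ChuBiextensional C) (hD : ChuBiextensional D) :
    MonicIn ChuBiextensional φ ↔ Function.Injective φ.f := by
  constructor
  · intro hm a b hab
    -- test space: one point, attributes = S
    set E : ChuSpace S := ⟨PUnit, S, fun _ s => s⟩ with hE
    have hEbi : ChuBiextensional E := by
      constructor
      · intro x y h; exact h PUnit.unit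
      · intro u v _; rfl
    let ψ₁ : ChuHom E C := ⟨fun _ => a, fun y => C.r a y, fun _ _ => rfl⟩
    let ψ₂ : ChuHom E C := ⟨fun _ => b, fun y => C.r b y, fun _ _ => rfl⟩
    have hcomp : φ.comp ψ₁ = φ.comp ψ₂ := by
      apply ChuHom.ext
      · funext u; exact hab
      · funext y
        show C.r a (φ.g y) = C.r b (φ.g y)
        rw [← φ.comm, ← φ.comm, hab]
    have := hm E hEbi ψ₁ ψ₂ hcomp
    apply hC.2
    intro x
    exact congrFun (congrArg ChuHom.g this) x
  · intro hf E hEbi ψ₁ ψ₂ hcomp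
    have hf' : ψ₁.f = ψ₂.f := by
      funext a
      apply hf
      exact congrFun (congrArg ChuHom.f hcomp) a
    apply ChuHom.ext hf'
    funext y
    apply hEbi.1
    intro a
    rw [← ψ₁.comm, ← ψ₂.comm, hf']
end

section
/- In the category of separable Chu spaces over Σ (|Σ| ≥ 2), a morphism φ is monic if and only if its backward component φ⁻ is surjective. -/
universe u

variable {S : Type u}

/-!
A morphism into a separable space is determined by its backward component, because the Chu
condition fixes the row of every image point; hence a surjective `φ⁻` can be cancelled.
Conversely, Chu spaces with no points are separable, and morphisms out of them are just maps on
attributes, so monicity of `φ` against them makes `φ⁻` an epimorphism of types, i.e. surjective.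
-/

def ChuSpace.emptyPoints (X : Type u) : ChuSpace S := ⟨PEmpty, X, PEmpty.elim⟩

theorem ChuSpace.separable_emptyPoints (X : Type u) :
    ChuSeparable (ChuSpace.emptyPoints (S := S) X) :=
  fun a => a.elim

def ChuHom.ofEmptyPoints {X : Type u} {C : ChuSpace S} (g : C.X → X) :
    ChuHom (ChuSpace.emptyPoints X) C :=
  ⟨PEmpty.elim, g, fun a => a.elim⟩

theorem ChuHom.ext_of_separable {C D : ChuSpace S} (hD : ChuSeparable D) {ψ₁ ψ₂ : ChuHom C D}
    (hg : ψ₁.g = ψ₂.g) : ψ₁ = ψ₂ := by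
  refine ChuHom.ext (funext fun a => hD _ _ fun x => ?_) hg
  rw [ψ₁.comm, ψ₂.comm, hg]

theorem monicIn_of_surjective_g (Obj : ChuSpace S → Prop) {C D : ChuSpace S} {φ : ChuHom C D}
    (hC : ChuSeparable C) (hφ : Function.Surjective φ.g) : MonicIn Obj φ :=
  fun _ _ _ _ hcomp =>
    ChuHom.ext_of_separable hC (hφ.injective_comp_right (congrArg ChuHom.g hcomp))

theorem surjective_g_of_monicIn {Obj : ChuSpace S → Prop}
    (hObj : ∀ X : Type u, Obj (ChuSpace.emptyPoints X)) {C D : ChuSpace S} {φ : ChuHom C D}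
    (hφ : MonicIn Obj φ) : Function.Surjective φ.g := by
  refine Function.surjective_of_right_cancellable_Prop fun p₁ p₂ hp => ?_
  have hψ : ChuHom.ofEmptyPoints (ULift.up ∘ p₁) = ChuHom.ofEmptyPoints (ULift.up ∘ p₂) :=
    hφ _ (hObj _) _ _ (ChuHom.ext rfl (congrArg (ULift.up ∘ ·) hp))
  exact funext fun x => congrArg ULift.down (congrFun (congrArg ChuHom.g hψ) x)

theorem stmt8_general {S : Type u} {C D : ChuSpace S} (φ : ChuHom C D)
    (hC : ChuSeparable C) :
    MonicIn ChuSeparable φ ↔ Function.Surjective φ.g :=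
  ⟨surjective_g_of_monicIn ChuSpace.separable_emptyPoints, monicIn_of_surjective_g _ hC⟩

/-- In the category of separable Chu spaces over `S` (`|S| ≥ 2`), a morphism is monic
iff its backward component is surjective. -/
theorem stmt8 {S : Type u} (h2 : ∃ σ τ : S, σ ≠ τ) {C D : ChuSpace S} (φ : ChuHom C D)
    (hC : ChuSeparable C) (hD : ChuSeparable D) :
    MonicIn ChuSeparable φ ↔ Function.Surjective φ.g :=
  stmt8_general φ hC
end

section
/- Colimits of ω-chains of finite Chu spaces do not always exist in the category iC of Chu spaces with monic morphisms. Specifically, the ω-sequence (Cᵢ, φᵢ) where Cᵢ = ({1,...,i}, rᵢ, {1,...,i}) with rᵢ(a,x) = 1 iff a ≤ x, and φᵢ⁺(a) = a, φᵢ⁻(i+1) = i, φᵢ⁻(x) = x for x ≤ i, has no colimit in iC. -/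
universe u

variable {S : Type u}

/-- The finite biextensional Chu space with objects and attributes `{1, …, n+1}`
(encoded as `Fin (n+1)`) and `r a x = 1` iff `a ≤ x`. -/
def stairChu (n : ℕ) : ChuSpace.{0} Bool :=
  ⟨Fin (n+1), Fin (n+1), fun a x => decide (a.1 ≤ x.1)⟩

/-- The connecting monic morphism: forward the inclusion, backward collapsing the top
attribute `n+2` to `n+1` and the identity otherwise. -/
def stairHom (n : ℕ) : ChuHom (stairChu n) (stairChu (n+1)) where
  f := fun a => ⟨a.1, by omega⟩
  g := fun x => ⟨min x.1 n, by omega⟩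
  comm := by
    intro a x
    have := a.isLt
    simp only [stairChu, decide_eq_decide]
    omega

def stairSeq : ChuSeq Bool := ⟨stairChu, stairHom⟩

/-!
The staircase sequence has two monic cocones: into `natChu` (objects and attributes `ℕ`,
`a ≤ x`) and into `natTopChu`, which adds an all-`true` column restricting at stage `i` to the
top attribute `i`. A colimit would map to both, and its map to `natChu` is surjective on
attributes, so the colimit's image of the extra column is also the image of some `k : ℕ`. At stage
`k + 1` these restrict to `k` and to `k + 1` respectively, a contradiction.
-/

theorem Cocone.exists_g_eq_of_mediating {T : ChuSeq S} {C C₁ C₂ : ChuSpace S}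
    {c : Cocone T C} {c₁ : Cocone T C₁} {c₂ : Cocone T C₂}
    {μ₁ : ChuHom C C₁} {μ₂ : ChuHom C C₂} (hμ₁ : Function.Surjective μ₁.g)
    (h₁ : ∀ i, μ₁.comp (c.ψ i) = c₁.ψ i) (h₂ : ∀ i, μ₂.comp (c.ψ i) = c₂.ψ i) (x₂ : C₂.X) :
    ∃ x₁ : C₁.X, ∀ i, (c₁.ψ i).g x₁ = (c₂.ψ i).g x₂ := by
  obtain ⟨x₁, hx₁⟩ := hμ₁ (μ₂.g x₂)
  refine ⟨x₁, fun i => ?_⟩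
  rw [← h₁, ← h₂]
  exact congrArg (c.ψ i).g hx₁

def natChu : ChuSpace.{0} Bool := ⟨ℕ, ℕ, fun a x => decide (a ≤ x)⟩

def natTopChu : ChuSpace.{0} Bool :=
  ⟨ℕ, Option ℕ, fun a x => x.elim true (fun k => decide (a ≤ k))⟩

def natCocone : Cocone stairSeq natChu where
  ψ i :=
    { f := fun a => a.1
      g := fun k => ⟨min k i, by omega⟩
      comm := fun a k => by
        have := a.isLt
        simp only [stairSeq, stairChu, natChu, decide_eq_decide]
        omega }
  compat i := ChuHom.ext rfl <| funext fun (k : ℕ) => Fin.ext <| by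
    show min (min k (i + 1)) i = min k i
    omega

def natTopCocone : Cocone stairSeq natTopChu where
  ψ i :=
    { f := fun a => a.1
      g := fun x => x.elim ⟨i, by omega⟩ (fun k => ⟨min k i, by omega⟩)
      comm := fun a x => by
        have := a.isLt
        cases x with
        | none => simpa [stairSeq, stairChu, natTopChu] using Nat.le_of_lt_succ this
        | some k =>
          simp only [stairSeq, stairChu, natTopChu, Option.elim, decide_eq_decide]
          omega }
  compat i := ChuHom.ext rfl <| funext fun x => Fin.ext <| by
    cases x with
    | none => exact Nat.min_eq_right (Nat.le_succ i)
    | some k =>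
      show min (min k (i + 1)) i = min k i
      omega

theorem isMonoC_natCocone_ψ (i : ℕ) : IsMonoC (natCocone.ψ i) :=
  ⟨fun _ _ h => Fin.ext h, fun k => ⟨k.1, Fin.ext (Nat.min_eq_left (Nat.le_of_lt_succ k.isLt))⟩⟩

theorem isMonoC_natTopCocone_ψ (i : ℕ) : IsMonoC (natTopCocone.ψ i) :=
  ⟨fun _ _ h => Fin.ext h,
    fun k => ⟨some k.1, Fin.ext (Nat.min_eq_left (Nat.le_of_lt_succ k.isLt))⟩⟩

theorem natCocone_g_ne_natTopCocone_g_none (k : ℕ) :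
    (natCocone.ψ (k + 1)).g k ≠ (natTopCocone.ψ (k + 1)).g none := by
  intro h
  have h' : min k (k + 1) = k + 1 := congrArg Fin.val h
  omega

/-- Colimits of ω-chains of finite Chu spaces do not always exist in `iC`:
the staircase sequence has no colimit in the category of Chu spaces over `{0,1}`
with monic morphisms (injective forward, surjective backward components). -/
theorem stmt9 :
    ¬ ∃ (C : ChuSpace.{0} Bool) (c : Cocone stairSeq C),
      IsColimit (fun _ => True) (fun _ _ φ => IsMonoC φ) stairSeq C c := by
  rintro ⟨C, c, hc⟩
  obtain ⟨μ₁, ⟨hμ₁, h₁⟩, -⟩ := hc.univ natChu trivial natCocone isMonoC_natCocone_ψ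
  obtain ⟨μ₂, ⟨-, h₂⟩, -⟩ := hc.univ natTopChu trivial natTopCocone isMonoC_natTopCocone_ψ
  obtain ⟨k, hk⟩ := Cocone.exists_g_eq_of_mediating hμ₁.2 h₁ h₂ none
  exact natCocone_g_ne_natTopCocone_g_none k (hk _)
end

section
/- If an ω-sequence (Cᵢ, φᵢ) in iC (Chu spaces with monic morphisms) has a colimit, then this colimit is isomorphic to the canonical cocone (ψᵢ : Cᵢ → C) given by the inverse-limit-of-attributes construction: A = ⋃ᵢ Aᵢ (assuming φᵢ⁺ are inclusions), X = {(xⱼ) : φⱼ⁻(xⱼ₊₁) = xⱼ}, r(a,(xⱼ)) = rᵢ(a,xᵢ) for a ∈ Aᵢ. -/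
universe u

variable {S : Type u}

namespace Stmt11Aux

variable {X : ℕ → Type u}

noncomputable def tower (g : ∀ i, X (i+1) → X i) (hs : ∀ i, Function.Surjective (g i))
    (i : ℕ) (y : X i) : ∀ n, X (i + n)
  | 0 => y
  | n+1 => (hs (i+n) (tower g hs i y n)).choose

lemma tower_spec (g : ∀ i, X (i+1) → X i) (hs : ∀ i, Function.Surjective (g i))
    (i : ℕ) (y : X i) (n : ℕ) :
    g (i+n) (tower g hs i y (n+1)) = tower g hs i y n :=
  (hs (i+n) (tower g hs i y n)).choose_spec

def down (g : ∀ i, X (i+1) → X i) : ∀ (k j : ℕ), X (j + k) → X j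
  | 0, _, z => z
  | k+1, j, z => down g k j (g (j+k) z)

lemma g_cast (g : ∀ i, X (i+1) → X i) {m n : ℕ} (h : n = m)
    (h1 : X (n+1) = X (m+1)) (h2 : X n = X m) (z : X (n+1)) :
    g m (cast h1 z) = cast h2 (g n z) := by
  subst h
  rfl

lemma down_succ (g : ∀ i, X (i+1) → X i) :
    ∀ (k j : ℕ) (h : X (j + (k+1)) = X ((j+1) + k)) (z : X (j + (k+1))),
      g j (down g k (j+1) (cast h z)) = down g (k+1) j z := by
  intro k
  induction k with
  | zero =>
    intro j h z
    show g j (cast h z) = g j z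
    exact congrArg (g j) (eq_of_heq (cast_heq h z))
  | succ k ih =>
    intro j h z
    show g j (down g k (j+1) (g ((j+1)+k) (cast h z))) = down g (k+1) j (g (j+(k+1)) z)
    have e : g ((j+1)+k) (cast h z) =
        cast (congrArg X (Nat.succ_add j k).symm) (g (j+(k+1)) z) :=
      g_cast g (Nat.succ_add j k).symm _ _ z
    rw [e]
    exact ih j _ (g (j+(k+1)) z)

lemma down_tower (g : ∀ i, X (i+1) → X i) (hs : ∀ i, Function.Surjective (g i))
    (i : ℕ) (y : X i) : ∀ k, down g k i (tower g hs i y k) = y := by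
  intro k
  induction k with
  | zero => rfl
  | succ k ih =>
    show down g k i (g (i+k) (tower g hs i y (k+1))) = y
    rw [tower_spec g hs i y k]
    exact ih

lemma exists_section (g : ∀ i, X (i+1) → X i) (hs : ∀ i, Function.Surjective (g i))
    (i : ℕ) (y : X i) :
    ∃ x : ∀ j, X j, (∀ j, g j (x (j+1)) = x j) ∧ x i = y := by
  refine ⟨fun j => down g i j (cast (congrArg X (Nat.add_comm i j)) (tower g hs i y j)), ?_, ?_⟩
  · intro j
    beta_reduce
    have e0 : X (i + (j+1)) = X (j + (i+1)) := congrArg X (by omega)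
    have h : X (j + (i+1)) = X ((j+1) + i) := congrArg X (by omega)
    set w := tower g hs i y (j+1) with hw
    have key : cast (congrArg X (Nat.add_comm i (j+1))) w = cast h (cast e0 w) := by
      exact eq_of_heq ((cast_heq _ _).trans ((cast_heq h (cast e0 w)).trans (cast_heq e0 w)).symm)
    rw [key, down_succ g i j h (cast e0 w)]
    show down g i j (g (j+i) (cast e0 w)) = _
    have e2 : g (j+i) (cast e0 w) =
        cast (congrArg X (Nat.add_comm i j)) (g (i+j) w) :=
      g_cast g (Nat.add_comm i j) _ _ w
    rw [e2, tower_spec g hs i y j]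
  · have : cast (congrArg X (Nat.add_comm i i)) (tower g hs i y i) = tower g hs i y i :=
      eq_of_heq (cast_heq _ _)
    beta_reduce
    rw [this, down_tower]

end Stmt11Aux


/-- If an ω-sequence in `iC` (forward components inclusions, backward components
surjective) has a colimit, then the colimit is isomorphic to the canonical cocone
given by the union-of-objects / inverse-limit-of-attributes construction. -/
theorem stmt11 {S α : Type u} (A : ℕ → Set α) (hA : ∀ i, A i ⊆ A (i+1))
    (X : ℕ → Type u) (r : ∀ i, ↥(A i) → X i → S) (g : ∀ i, X (i+1) → X i)
    (hc : ∀ (i : ℕ) (a : ↥(A i)) (x : X (i+1)),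
      r (i+1) (Set.inclusion (hA i) a) x = r i a (g i x))
    (hs : ∀ i, Function.Surjective (g i))
    (r' : ↥(⋃ i, A i) → {x : ∀ i, X i // ∀ i, g i (x (i+1)) = x i} → S)
    (hr' : ∀ (i : ℕ) (a : α) (ha : a ∈ A i)
        (x : {x : ∀ i, X i // ∀ i, g i (x (i+1)) = x i}),
      r' ⟨a, Set.mem_iUnion.mpr ⟨i, ha⟩⟩ x = r i ⟨a, ha⟩ (x.1 i))
    (c : Cocone (⟨fun i => ⟨↥(A i), X i, r i⟩,
                  fun i => ⟨Set.inclusion (hA i), g i, hc i⟩⟩ : ChuSeq S)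
        ⟨↥(⋃ i, A i), {x : ∀ i, X i // ∀ i, g i (x (i+1)) = x i}, r'⟩)
    (hcf : ∀ (i : ℕ) (a : ↥(A i)), ((c.ψ i).f a : α) = (a : α))
    (hcg : ∀ (i : ℕ) (x : {x : ∀ i, X i // ∀ i, g i (x (i+1)) = x i}),
      (c.ψ i).g x = x.1 i)
    (C' : ChuSpace S)
    (c' : Cocone (⟨fun i => ⟨↥(A i), X i, r i⟩,
                   fun i => ⟨Set.inclusion (hA i), g i, hc i⟩⟩ : ChuSeq S) C')
    (hcol : IsColimit (fun _ => True) (fun _ _ φ => IsMonoC φ)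
      (⟨fun i => ⟨↥(A i), X i, r i⟩,
        fun i => ⟨Set.inclusion (hA i), g i, hc i⟩⟩ : ChuSeq S) C' c') :
    ∃ μ : ChuHom C' ⟨↥(⋃ i, A i), {x : ∀ i, X i // ∀ i, g i (x (i+1)) = x i}, r'⟩,
      ChuIso μ ∧ ∀ i, μ.comp (c'.ψ i) = c.ψ i := by
  classical
  obtain ⟨μ, ⟨hμmono, hμcomp⟩, -⟩ := hcol.univ _ trivial c (by
    intro i
    constructor
    · intro a b hab
      apply Subtype.ext
      rw [← hcf i a, ← hcf i b, hab]
    · intro y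
      obtain ⟨x, hx, hxi⟩ := Stmt11Aux.exists_section g hs i y
      exact ⟨⟨x, hx⟩, by rw [hcg]; exact hxi⟩)
  have hfsurj : Function.Surjective μ.f := by
    rintro ⟨b, hb⟩
    obtain ⟨i, hbi⟩ := Set.mem_iUnion.mp hb
    refine ⟨(c'.ψ i).f ⟨b, hbi⟩, ?_⟩
    have h2 : μ.f ((c'.ψ i).f ⟨b, hbi⟩) = (c.ψ i).f ⟨b, hbi⟩ :=
      congrFun (congrArg ChuHom.f (hμcomp i)) ⟨b, hbi⟩
    rw [h2]
    exact Subtype.ext (hcf i ⟨b, hbi⟩)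
  have hginj : Function.Injective μ.g := by
    intro x x' hxx
    apply Subtype.ext
    funext i
    have h2 : (c'.ψ i).g (μ.g x) = (c.ψ i).g x :=
      congrFun (congrArg ChuHom.g (hμcomp i)) x
    have h3 : (c'.ψ i).g (μ.g x') = (c.ψ i).g x' :=
      congrFun (congrArg ChuHom.g (hμcomp i)) x'
    rw [hxx, h3] at h2
    rw [hcg, hcg] at h2
    exact h2.symm
  let ef := Equiv.ofBijective μ.f ⟨hμmono.1, hfsurj⟩
  let eg := Equiv.ofBijective μ.g ⟨hginj, hμmono.2⟩
  have hef : ∀ a, μ.f a = ef a := fun _ => rfl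
  have heg : ∀ y, μ.g y = eg y := fun _ => rfl
  refine ⟨μ, ⟨⟨ef.symm, eg.symm, ?_⟩, ?_, ?_⟩, hμcomp⟩
  · intro a y
    have h1 : μ.f (ef.symm a) = a := by rw [hef]; exact ef.apply_symm_apply a
    have h2 : μ.g (eg.symm y) = y := by rw [heg]; exact eg.apply_symm_apply y
    calc C'.r (ef.symm a) y
        = C'.r (ef.symm a) (μ.g (eg.symm y)) := by rw [h2]
      _ = r' (μ.f (ef.symm a)) (eg.symm y) := (μ.comm _ _).symm
      _ = r' a (eg.symm y) := by rw [h1]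
  · apply ChuHom.ext
    · funext b
      show μ.f (ef.symm b) = b
      rw [hef]; exact ef.apply_symm_apply b
    · funext y
      show eg.symm (μ.g y) = y
      rw [heg]; exact eg.symm_apply_apply y
  · apply ChuHom.ext
    · funext a
      show ef.symm (μ.f a) = a
      rw [hef]; exact ef.symm_apply_apply a
    · funext x
      show μ.g (eg.symm x) = x
      rw [heg]; exact eg.apply_symm_apply x
end

section
/- Colimits of all ω-sequences exist in the category iE of extensional Chu spaces with monic morphisms, and are given by the canonical construction: with the φᵢ⁺ taken as inclusions, C = (⋃Aᵢ, r, X) where X is the set of compatible attribute sequences; this C is extensional and the canonical cocone is universal. -/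
universe u

variable {S : Type u}

section Aux

variable {S α : Type u} (A : ℕ → Set α) (hA : ∀ i, A i ⊆ A (i+1))

include hA

lemma monoA : ∀ {i j : ℕ}, i ≤ j → A i ⊆ A j := by
  intro i j h
  induction h with
  | refl => exact Set.Subset.rfl
  | step _ ih => exact ih.trans (hA _)

variable (X : ℕ → Type u) (r : ∀ i, ↥(A i) → X i → S) (g : ∀ i, X (i+1) → X i)
  (hc : ∀ (i : ℕ) (a : ↥(A i)) (x : X (i+1)),
    r (i+1) (Set.inclusion (hA i) a) x = r i a (g i x))

include hc

lemma keyR (x : ∀ i, X i) (hx : ∀ i, g i (x (i+1)) = x i) {i j : ℕ} (h : i ≤ j)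
    (a : α) (hi : a ∈ A i) :
    r j ⟨a, monoA A hA h hi⟩ (x j) = r i ⟨a, hi⟩ (x i) := by
  induction h with
  | refl => rfl
  | @step k hk ih =>
    have h1 : (⟨a, monoA A hA (Nat.le_succ_of_le hk) hi⟩ : ↥(A (k+1)))
        = Set.inclusion (hA k) ⟨a, monoA A hA hk hi⟩ := rfl
    rw [h1, hc k, hx k]
    exact ih

lemma keyR' (x : ∀ i, X i) (hx : ∀ i, g i (x (i+1)) = x i) {i j : ℕ}
    (a : α) (hi : a ∈ A i) (hj : a ∈ A j) :
    r i ⟨a, hi⟩ (x i) = r j ⟨a, hj⟩ (x j) := by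
  have h1 := keyR A hA X r g hc x hx (Nat.le_max_left i j) a hi
  have h2 := keyR A hA X r g hc x hx (Nat.le_max_right i j) a hj
  rw [← h1, ← h2]

/-- Consistency of the forward components of any cocone under the sequence. -/
lemma fKey (C' : ChuSpace S)
    (c' : Cocone (⟨fun i => ⟨↥(A i), X i, r i⟩,
        fun i => ⟨Set.inclusion (hA i), g i, hc i⟩⟩ : ChuSeq S) C')
    {i j : ℕ} (h : i ≤ j) (a : α) (hi : a ∈ A i) :
    (c'.ψ j).f ⟨a, monoA A hA h hi⟩ = (c'.ψ i).f ⟨a, hi⟩ := by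
  induction h with
  | refl => rfl
  | @step k hk ih =>
    have h0 := congrFun (congrArg ChuHom.f (c'.compat k)) ⟨a, monoA A hA hk hi⟩
    have h1 : (⟨a, monoA A hA (Nat.le_succ_of_le hk) hi⟩ : ↥(A (k+1)))
        = Set.inclusion (hA k) ⟨a, monoA A hA hk hi⟩ := rfl
    rw [h1]
    exact h0.trans ih

lemma fKey' (C' : ChuSpace S)
    (c' : Cocone (⟨fun i => ⟨↥(A i), X i, r i⟩,
        fun i => ⟨Set.inclusion (hA i), g i, hc i⟩⟩ : ChuSeq S) C')
    {i j : ℕ} (a : α) (hi : a ∈ A i) (hj : a ∈ A j) :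
    (c'.ψ i).f ⟨a, hi⟩ = (c'.ψ j).f ⟨a, hj⟩ := by
  have h1 := fKey A hA X r g hc C' c' (Nat.le_max_left i j) a hi
  have h2 := fKey A hA X r g hc C' c' (Nat.le_max_right i j) a hj
  rw [← h1, ← h2]

end Aux

/-- Colimits of ω-sequences exist in `iE` and are given by the canonical construction:
for a chain of extensional Chu spaces with inclusions as forward components, the
canonical Chu space is extensional and the canonical cocone is a colimit in the
category of extensional Chu spaces with monic morphisms. -/
theorem stmt12 {S α : Type u} (A : ℕ → Set α) (hA : ∀ i, A i ⊆ A (i+1))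
    (X : ℕ → Type u) (r : ∀ i, ↥(A i) → X i → S) (g : ∀ i, X (i+1) → X i)
    (hc : ∀ (i : ℕ) (a : ↥(A i)) (x : X (i+1)),
      r (i+1) (Set.inclusion (hA i) a) x = r i a (g i x))
    (hext : ∀ i, ChuExtensional (⟨↥(A i), X i, r i⟩ : ChuSpace S)) :
    ∃ r' : ↥(⋃ i, A i) → {x : ∀ i, X i // ∀ i, g i (x (i+1)) = x i} → S,
      (∀ (i : ℕ) (a : α) (ha : a ∈ A i)
          (x : {x : ∀ i, X i // ∀ i, g i (x (i+1)) = x i}),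
        r' ⟨a, Set.mem_iUnion.mpr ⟨i, ha⟩⟩ x = r i ⟨a, ha⟩ (x.1 i)) ∧
      ChuExtensional (⟨↥(⋃ i, A i), {x : ∀ i, X i // ∀ i, g i (x (i+1)) = x i}, r'⟩ :
        ChuSpace S) ∧
      ∃ c : Cocone (⟨fun i => ⟨↥(A i), X i, r i⟩,
                     fun i => ⟨Set.inclusion (hA i), g i, hc i⟩⟩ : ChuSeq S)
          ⟨↥(⋃ i, A i), {x : ∀ i, X i // ∀ i, g i (x (i+1)) = x i}, r'⟩,
        (∀ i : ℕ, (∀ a : ↥(A i), ((c.ψ i).f a : α) = (a : α)) ∧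
          (∀ x : {x : ∀ i, X i // ∀ i, g i (x (i+1)) = x i}, (c.ψ i).g x = x.1 i)) ∧
        IsColimit ChuExtensional (fun _ _ φ => IsMonoE φ)
          (⟨fun i => ⟨↥(A i), X i, r i⟩,
            fun i => ⟨Set.inclusion (hA i), g i, hc i⟩⟩ : ChuSeq S)
          ⟨↥(⋃ i, A i), {x : ∀ i, X i // ∀ i, g i (x (i+1)) = x i}, r'⟩ c := by
  classical
  set XX := {x : ∀ i, X i // ∀ i, g i (x (i+1)) = x i} with hXX
  -- choice of index for each element of the union
  have memU : ∀ a : ↥(⋃ i, A i), ∃ i, (a : α) ∈ A i := fun a => Set.mem_iUnion.mp a.2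
  set idx : ↥(⋃ i, A i) → ℕ := fun a => (memU a).choose with hidx
  have idxmem : ∀ a : ↥(⋃ i, A i), (a : α) ∈ A (idx a) := fun a => (memU a).choose_spec
  set r' : ↥(⋃ i, A i) → XX → S :=
    fun a x => r (idx a) ⟨a.1, idxmem a⟩ (x.1 (idx a)) with hr'
  have spec : ∀ (i : ℕ) (a : α) (ha : a ∈ A i) (x : XX),
      r' ⟨a, Set.mem_iUnion.mpr ⟨i, ha⟩⟩ x = r i ⟨a, ha⟩ (x.1 i) := by
    intro i a ha x
    exact keyR' A hA X r g hc x.1 x.2 a (idxmem ⟨a, Set.mem_iUnion.mpr ⟨i, ha⟩⟩) ha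
  have spec' : ∀ (a : ↥(⋃ i, A i)) (i : ℕ) (ha : (a : α) ∈ A i) (x : XX),
      r' a x = r i ⟨a.1, ha⟩ (x.1 i) := by
    intro a i ha x
    exact keyR' A hA X r g hc x.1 x.2 a.1 (idxmem a) ha
  refine ⟨r', spec, ?_, ?_⟩
  · -- extensionality
    intro x y h
    apply Subtype.ext
    funext i
    apply hext i
    intro a
    have h1 := h ⟨a.1, Set.mem_iUnion.mpr ⟨i, a.2⟩⟩
    exact (spec i a.1 a.2 x).symm.trans (h1.trans (spec i a.1 a.2 y))
  · -- the cocone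
    set T : ChuSeq S := ⟨fun i => ⟨↥(A i), X i, r i⟩,
        fun i => ⟨Set.inclusion (hA i), g i, hc i⟩⟩ with hT
    set CC : ChuSpace S := ⟨↥(⋃ i, A i), XX, r'⟩ with hCC
    have ψcomm : ∀ (i : ℕ) (a : ↥(A i)) (x : XX),
        r' ⟨a.1, Set.mem_iUnion.mpr ⟨i, a.2⟩⟩ x = r i a (x.1 i) := by
      intro i a x; exact spec i a.1 a.2 x
    set c : Cocone T CC :=
      ⟨fun i => ⟨fun a => ⟨a.1, Set.mem_iUnion.mpr ⟨i, a.2⟩⟩, fun x => x.1 i, ψcomm i⟩,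
        by
          intro i
          apply ChuHom.ext
          · funext a; rfl
          · funext x; exact x.2 i⟩ with hcdef
    refine ⟨c, fun i => ⟨fun a => rfl, fun x => rfl⟩, ?_, ?_, ?_⟩
    · -- object is extensional (same proof as above)
      intro x y h
      apply Subtype.ext
      funext i
      apply hext i
      intro a
      have h1 := h ⟨a.1, Set.mem_iUnion.mpr ⟨i, a.2⟩⟩
      exact (spec i a.1 a.2 x).symm.trans (h1.trans (spec i a.1 a.2 y))
    · -- each leg is monic
      intro i a b hab
      apply Subtype.ext
      exact congrArg (Subtype.val : ↥(⋃ i, A i) → α) hab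
    · -- universality
      intro C' _ c' hm
      have gcompat : ∀ (y : C'.X) (i : ℕ),
          g i ((c'.ψ (i+1)).g y) = (c'.ψ i).g y := by
        intro y i
        exact congrFun (congrArg ChuHom.g (c'.compat i)) y
      set μ : ChuHom CC C' :=
        ⟨fun a => (c'.ψ (idx a)).f ⟨a.1, idxmem a⟩,
         fun y => ⟨fun i => (c'.ψ i).g y, gcompat y⟩,
         by
          intro a y
          exact ((c'.ψ (idx a)).comm ⟨a.1, idxmem a⟩ y)⟩ with hμ
    -- note: CC.r a (μ.g y) = r (idx a) ⟨a.1,_⟩ ((c'.ψ (idx a)).g y) definitionally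
      refine ⟨μ, ⟨?_, ?_⟩, ?_⟩
      · -- μ is monic
        intro a b hab
        have ha := idxmem a
        have hb := idxmem b
        have h1 : (c'.ψ (max (idx a) (idx b))).f
            ⟨a.1, monoA A hA (Nat.le_max_left _ _) ha⟩
            = (c'.ψ (max (idx a) (idx b))).f
            ⟨b.1, monoA A hA (Nat.le_max_right _ _) hb⟩ := by
          rw [fKey A hA X r g hc C' c' (Nat.le_max_left _ _) a.1 ha,
              fKey A hA X r g hc C' c' (Nat.le_max_right _ _) b.1 hb]
          exact hab
        have h2 := hm (max (idx a) (idx b)) h1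
        exact Subtype.ext (congrArg (Subtype.val : ↥(A (max (idx a) (idx b))) → α) h2)
      · -- μ commutes with cocone legs
        intro i
        apply ChuHom.ext
        · funext a
          exact fKey' A hA X r g hc C' c' a.1
            (idxmem ⟨a.1, Set.mem_iUnion.mpr ⟨i, a.2⟩⟩) a.2
        · funext y; rfl
      · -- uniqueness
        rintro μ' ⟨-, hμ'⟩
        apply ChuHom.ext
        · funext a
          have h0 : a = (c.ψ (idx a)).f ⟨a.1, idxmem a⟩ := Subtype.ext rfl
          calc μ'.f a = μ'.f ((c.ψ (idx a)).f ⟨a.1, idxmem a⟩) := by rw [← h0]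
            _ = (c'.ψ (idx a)).f ⟨a.1, idxmem a⟩ :=
                congrFun (congrArg ChuHom.f (hμ' (idx a))) ⟨a.1, idxmem a⟩
            _ = μ.f a := rfl
        · funext y
          apply Subtype.ext
          funext i
          exact congrFun (congrArg ChuHom.g (hμ' i)) y
end

section
/- If C is the canonical colimit in iE of an ω-sequence (Cᵢ, φᵢ) of finite biextensional Chu structures (each Aᵢ and Xᵢ finite), then C is biextensional; hence colimits of ω-sequences of finite Chu structures exist in the category iB of biextensional Chu spaces with monic morphisms. -/
universe u

variable {S : Type u}

/-!
The attribute set of the colimit is the inverse limit of the `X i`, so two columns that agree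
everywhere agree at every stage and are equal by stagewise extensionality. For separability, let
`a ≠ b` lie in `A k`. At every stage `m ≥ k` some attribute distinguishes `a` from `b`, and by the
Chu condition `g` maps distinguishing attributes to distinguishing ones. These finite nonempty sets
form an inverse system, so König's lemma yields a compatible thread: an attribute of the colimit
that separates `a` and `b`. The universal property is that of the union on objects and of the
inverse limit on attributes.
-/

open CategoryTheory

theorem exists_compatible_seq_of_finite {T : ℕ → Type*} [∀ n, Finite (T n)]
    [∀ n, Nonempty (T n)] (g : ∀ n, T (n+1) → T n) :
    ∃ x : ∀ n, T n, ∀ n, g n (x (n+1)) = x n := by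
  let F : ℕᵒᵖ ⥤ Type _ := Functor.ofOpSequence (X := T) fun n => TypeCat.ofHom (g n)
  have : ∀ j : ℕᵒᵖ, Finite (F.obj j) := fun j => inferInstanceAs (Finite (T j.unop))
  have : ∀ j : ℕᵒᵖ, Nonempty (F.obj j) := fun j => inferInstanceAs (Nonempty (T j.unop))
  obtain ⟨x, hx⟩ := nonempty_sections_of_finite_inverse_system F
  refine ⟨fun n => x (Opposite.op n), fun n => ?_⟩
  have hsucc := hx (homOfLE (Nat.le_add_right n 1)).op
  rwa [Functor.ofOpSequence_map_homOfLE_succ] at hsucc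

theorem nonempty_of_le_of_succ_maps {T : ℕ → Type*} (g : ∀ n, T (n+1) → T n) {m n : ℕ}
    (h : m ≤ n) : Nonempty (T n) → Nonempty (T m) := by
  induction n, h using Nat.le_induction with
  | base => exact id
  | succ n _ ih => exact fun ⟨x⟩ => ih ⟨g n x⟩

section NatChain

variable {α β : Type*} {A : ℕ → Set α}

theorem exists_mem_mem_of_succ_subset (hA : ∀ i, A i ⊆ A (i+1)) {a b : α}
    (ha : a ∈ ⋃ i, A i) (hb : b ∈ ⋃ i, A i) : ∃ k, a ∈ A k ∧ b ∈ A k := by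
  obtain ⟨i, hi⟩ := Set.mem_iUnion.mp ha
  obtain ⟨j, hj⟩ := Set.mem_iUnion.mp hb
  exact ⟨max i j, monotone_nat_of_le_succ hA (le_max_left i j) hi,
    monotone_nat_of_le_succ hA (le_max_right i j) hj⟩

theorem eq_of_succ_inclusion_compat (hA : ∀ i, A i ⊆ A (i+1)) (f : ∀ i, A i → β)
    (hf : ∀ i a, f (i+1) (Set.inclusion (hA i) a) = f i a) (i j : ℕ) (x : α) (hi : x ∈ A i)
    (hj : x ∈ A j) : f i ⟨x, hi⟩ = f j ⟨x, hj⟩ := by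
  suffices key : ∀ i j, i ≤ j → ∀ (hi : x ∈ A i) (hj : x ∈ A j), f i ⟨x, hi⟩ = f j ⟨x, hj⟩ by
    rcases le_total i j with h | h
    · exact key i j h hi hj
    · exact (key j i h hj hi).symm
  intro i j hij
  induction j, hij using Nat.le_induction with
  | base => exact fun _ _ => rfl
  | succ j hij ih =>
    intro hi _
    have hj : x ∈ A j := monotone_nat_of_le_succ hA hij hi
    exact (ih hi hj).trans (hf j ⟨x, hj⟩).symm

end NatChain

section CanonicalColimit

variable {α : Type u} {A : ℕ → Set α} (hA : ∀ i, A i ⊆ A (i+1))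
  {X : ℕ → Type u} (r : ∀ i, ↥(A i) → X i → S) (g : ∀ i, X (i+1) → X i)
  (hc : ∀ (i : ℕ) (a : ↥(A i)) (x : X (i+1)),
    r (i+1) (Set.inclusion (hA i) a) x = r i a (g i x))

abbrev InvLimit : Type u := {x : ∀ i, X i // ∀ i, g i (x (i+1)) = x i}

abbrev stageSeq : ChuSeq S :=
  ⟨fun i => ⟨↥(A i), X i, r i⟩, fun i => ⟨Set.inclusion (hA i), g i, hc i⟩⟩

noncomputable def colimRel : ↥(⋃ i, A i) → InvLimit g → S :=
  Set.iUnionLift A (fun i a x => r i a (x.1 i))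
    (eq_of_succ_inclusion_compat hA (fun i a (x : InvLimit g) => r i a (x.1 i))
      fun i a => funext fun x => by rw [hc, x.2 i])
    _ subset_rfl

theorem colimRel_of_mem (a : ↥(⋃ i, A i)) {i : ℕ} (ha : a.1 ∈ A i) (x : InvLimit g) :
    colimRel hA r g hc a x = r i ⟨a, ha⟩ (x.1 i) := by
  rw [colimRel, Set.iUnionLift_of_mem a ha]

noncomputable abbrev colimSpace : ChuSpace S := ⟨↥(⋃ i, A i), InvLimit g, colimRel hA r g hc⟩

theorem colimSpace_extensional
    (hext : ∀ i, ChuExtensional (⟨↥(A i), X i, r i⟩ : ChuSpace S)) :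
    ChuExtensional (colimSpace hA r g hc) := by
  intro x y hxy
  refine Subtype.ext (funext fun i => hext i (x.1 i) (y.1 i) fun a => ?_)
  have ha : a.1 ∈ ⋃ i, A i := Set.mem_iUnion_of_mem i a.2
  simpa only [colimRel_of_mem hA r g hc ⟨a, ha⟩ a.2] using hxy ⟨a, ha⟩

theorem colimSpace_separable (hfin : ∀ i, Finite (X i))
    (hsep : ∀ i, ChuSeparable (⟨↥(A i), X i, r i⟩ : ChuSpace S)) :
    ChuSeparable (colimSpace hA r g hc) := by
  rintro ⟨a, haU⟩ ⟨b, hbU⟩ hab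
  obtain ⟨k, ha, hb⟩ := exists_mem_mem_of_succ_subset hA haU hbU
  have mono : ∀ {m}, k ≤ m → A k ⊆ A m := fun h => monotone_nat_of_le_succ hA h
  by_contra hne
  have distinguished : ∀ m (hm : k ≤ m), ∃ x, r m ⟨a, mono hm ha⟩ x ≠ r m ⟨b, mono hm hb⟩ x := by
    intro m hm
    by_contra! hsame
    exact hne (Subtype.ext (congrArg Subtype.val (hsep m _ _ hsame) :))
  let D : ℕ → Type u := fun m =>
    {x : X m // ∀ hm : k ≤ m, r m ⟨a, mono hm ha⟩ x ≠ r m ⟨b, mono hm hb⟩ x}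
  have : ∀ m, Finite (D m) := fun m => Subtype.finite
  have : ∀ m, Nonempty (D m) := by
    intro m
    rcases le_or_gt k m with hm | hm
    · obtain ⟨x, hx⟩ := distinguished m hm
      exact ⟨⟨x, fun _ => hx⟩⟩
    · obtain ⟨x⟩ := nonempty_of_le_of_succ_maps g hm.le ⟨(distinguished k le_rfl).choose⟩
      exact ⟨⟨x, fun hm' => absurd hm' (not_le.mpr hm)⟩⟩
  let gD : ∀ m, D (m+1) → D m := fun m x =>
    ⟨g m x.1, fun hm heq => x.2 (hm.trans m.le_succ) <| by
      rw [hc m ⟨a, mono hm ha⟩, hc m ⟨b, mono hm hb⟩]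
      exact heq⟩
  obtain ⟨t, ht⟩ := exists_compatible_seq_of_finite gD
  let x : InvLimit g := ⟨fun m => (t m).1, fun m => congrArg Subtype.val (ht m)⟩
  refine (t k).2 le_rfl ?_
  simpa only [colimRel_of_mem hA r g hc ⟨a, haU⟩ ha, colimRel_of_mem hA r g hc ⟨b, hbU⟩ hb]
    using hab x

theorem colimSpace_biextensional (hfin : ∀ i, Finite (X i))
    (hbi : ∀ i, ChuBiextensional (⟨↥(A i), X i, r i⟩ : ChuSpace S)) :
    ChuBiextensional (colimSpace hA r g hc) :=
  ⟨colimSpace_extensional hA r g hc fun i => (hbi i).1,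
    colimSpace_separable hA r g hc hfin fun i => (hbi i).2⟩

noncomputable def colimCocone : Cocone (stageSeq hA r g hc) (colimSpace hA r g hc) where
  ψ i := ⟨Set.inclusion (Set.subset_iUnion A i), fun x => x.1 i,
    fun a x => colimRel_of_mem hA r g hc _ a.2 x⟩
  compat i := ChuHom.ext rfl (funext fun x => x.2 i)

variable {hA r g hc} {C' : ChuSpace S} (c' : Cocone (stageSeq hA r g hc) C')

noncomputable def colimDesc : ChuHom (colimSpace hA r g hc) C' where
  f := Set.iUnionLift A (fun i => (c'.ψ i).f)
    (eq_of_succ_inclusion_compat hA _ fun i a => congrArg (fun ρ => ρ.f a) (c'.compat i))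
    _ subset_rfl
  g y := ⟨fun i => (c'.ψ i).g y, fun i => congrArg (fun ρ => ρ.g y) (c'.compat i)⟩
  comm a y := by
    obtain ⟨i, hi⟩ := Set.mem_iUnion.mp a.2
    simp only [colimRel_of_mem hA r g hc a hi, Set.iUnionLift_of_mem a hi]
    exact (c'.ψ i).comm _ y

theorem colimDesc_f_of_mem (a : ↥(⋃ i, A i)) {i : ℕ} (ha : a.1 ∈ A i) :
    (colimDesc c').f a = (c'.ψ i).f ⟨a, ha⟩ := by
  dsimp only [colimDesc]
  exact Set.iUnionLift_of_mem a ha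

theorem colimDesc_comp (i : ℕ) : (colimDesc c').comp ((colimCocone hA r g hc).ψ i) = c'.ψ i :=
  ChuHom.ext (funext fun a => colimDesc_f_of_mem c' _ a.2) rfl

theorem colimDesc_injective (hmono : ∀ i, IsMonoE (c'.ψ i)) :
    Function.Injective (colimDesc c').f := by
  rintro ⟨a, haU⟩ ⟨b, hbU⟩ hab
  obtain ⟨k, ha, hb⟩ := exists_mem_mem_of_succ_subset hA haU hbU
  rw [colimDesc_f_of_mem c' _ ha, colimDesc_f_of_mem c' _ hb] at hab
  exact Subtype.ext (congrArg Subtype.val (hmono k hab) :)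

theorem colimDesc_unique (μ : ChuHom (colimSpace hA r g hc) C')
    (hμ : ∀ i, μ.comp ((colimCocone hA r g hc).ψ i) = c'.ψ i) : μ = colimDesc c' := by
  refine ChuHom.ext (funext fun a => ?_) (funext fun y => ?_)
  · obtain ⟨i, hi⟩ := Set.mem_iUnion.mp a.2
    exact (congrArg (fun ρ => ρ.f ⟨a, hi⟩) (hμ i)).trans (colimDesc_f_of_mem c' a hi).symm
  · exact Subtype.ext (funext fun i => congrArg (fun ρ => ρ.g y) (hμ i))

variable (hA r g hc)

theorem isColimit_colimCocone (Obj : ChuSpace S → Prop) (hobj : Obj (colimSpace hA r g hc)) :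
    IsColimit Obj (fun _ _ φ => IsMonoE φ) (stageSeq hA r g hc) (colimSpace hA r g hc)
      (colimCocone hA r g hc) where
  obj := hobj
  mor i := Set.inclusion_injective (Set.subset_iUnion A i)
  univ _ _ c' hmono := ⟨colimDesc c', ⟨colimDesc_injective c' hmono, colimDesc_comp c'⟩,
    fun μ ⟨_, hμ⟩ => colimDesc_unique c' μ hμ⟩

end CanonicalColimit

theorem stmt13_general {S α : Type u} (A : ℕ → Set α) (hA : ∀ i, A i ⊆ A (i+1))
    (X : ℕ → Type u) (r : ∀ i, ↥(A i) → X i → S) (g : ∀ i, X (i+1) → X i)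
    (hc : ∀ (i : ℕ) (a : ↥(A i)) (x : X (i+1)),
      r (i+1) (Set.inclusion (hA i) a) x = r i a (g i x))
    (hXfin : ∀ i, Finite (X i))
    (hbi : ∀ i, ChuBiextensional (⟨↥(A i), X i, r i⟩ : ChuSpace S)) :
    ∃ r' : ↥(⋃ i, A i) → {x : ∀ i, X i // ∀ i, g i (x (i+1)) = x i} → S,
      (∀ (i : ℕ) (a : α) (ha : a ∈ A i)
          (x : {x : ∀ i, X i // ∀ i, g i (x (i+1)) = x i}),
        r' ⟨a, Set.mem_iUnion.mpr ⟨i, ha⟩⟩ x = r i ⟨a, ha⟩ (x.1 i)) ∧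
      ChuBiextensional (⟨↥(⋃ i, A i), {x : ∀ i, X i // ∀ i, g i (x (i+1)) = x i}, r'⟩ :
        ChuSpace S) ∧
      ∃ c : Cocone (⟨fun i => ⟨↥(A i), X i, r i⟩,
                     fun i => ⟨Set.inclusion (hA i), g i, hc i⟩⟩ : ChuSeq S)
          ⟨↥(⋃ i, A i), {x : ∀ i, X i // ∀ i, g i (x (i+1)) = x i}, r'⟩,
        IsColimit ChuBiextensional (fun _ _ φ => IsMonoE φ)
          (⟨fun i => ⟨↥(A i), X i, r i⟩,
            fun i => ⟨Set.inclusion (hA i), g i, hc i⟩⟩ : ChuSeq S)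
          ⟨↥(⋃ i, A i), {x : ∀ i, X i // ∀ i, g i (x (i+1)) = x i}, r'⟩ c :=
  ⟨colimRel hA r g hc, fun _ _ ha x => colimRel_of_mem hA r g hc _ ha x,
    colimSpace_biextensional hA r g hc hXfin hbi, colimCocone hA r g hc,
    isColimit_colimCocone hA r g hc _ (colimSpace_biextensional hA r g hc hXfin hbi)⟩

/-- For an ω-sequence of finite biextensional Chu structures (finite object and
attribute sets), the canonical colimit is biextensional and is a colimit in `iB`:
colimits of ω-sequences of finite Chu structures exist in the category of
biextensional Chu spaces with monic morphisms. -/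
theorem stmt13 {S α : Type u} (A : ℕ → Set α) (hA : ∀ i, A i ⊆ A (i+1))
    (X : ℕ → Type u) (r : ∀ i, ↥(A i) → X i → S) (g : ∀ i, X (i+1) → X i)
    (hc : ∀ (i : ℕ) (a : ↥(A i)) (x : X (i+1)),
      r (i+1) (Set.inclusion (hA i) a) x = r i a (g i x))
    (hAfin : ∀ i, Finite ↥(A i)) (hXfin : ∀ i, Finite (X i))
    (hbi : ∀ i, ChuBiextensional (⟨↥(A i), X i, r i⟩ : ChuSpace S)) :
    ∃ r' : ↥(⋃ i, A i) → {x : ∀ i, X i // ∀ i, g i (x (i+1)) = x i} → S,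
      (∀ (i : ℕ) (a : α) (ha : a ∈ A i)
          (x : {x : ∀ i, X i // ∀ i, g i (x (i+1)) = x i}),
        r' ⟨a, Set.mem_iUnion.mpr ⟨i, ha⟩⟩ x = r i ⟨a, ha⟩ (x.1 i)) ∧
      ChuBiextensional (⟨↥(⋃ i, A i), {x : ∀ i, X i // ∀ i, g i (x (i+1)) = x i}, r'⟩ :
        ChuSpace S) ∧
      ∃ c : Cocone (⟨fun i => ⟨↥(A i), X i, r i⟩,
                     fun i => ⟨Set.inclusion (hA i), g i, hc i⟩⟩ : ChuSeq S)
          ⟨↥(⋃ i, A i), {x : ∀ i, X i // ∀ i, g i (x (i+1)) = x i}, r'⟩,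
        IsColimit ChuBiextensional (fun _ _ φ => IsMonoE φ)
          (⟨fun i => ⟨↥(A i), X i, r i⟩,
            fun i => ⟨Set.inclusion (hA i), g i, hc i⟩⟩ : ChuSeq S)
          ⟨↥(⋃ i, A i), {x : ∀ i, X i // ∀ i, g i (x (i+1)) = x i}, r'⟩ c :=
  stmt13_general A hA X r g hc hXfin hbi
end

section
/- There exists an ω-sequence of (infinite) biextensional Chu spaces in iB which has no colimit in iB: take Cᵢ = (ℕ⁺, rᵢ, ℕ) with rᵢ(a,x) = 1 iff a divides (x+i−1), and φᵢ = (id, x ↦ x+1); any cocone (ψᵢ : Cᵢ → C) forces the attribute set of C to be empty, so C cannot be separable (its object set has more than one element). -/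
/-!
Every backward component `ψᵢ⁻` of a cocone from `divSeq` lands in `ℕ`, and compatibility with
`φᵢ⁻ = (· + 1)` gives `ψᵢ⁻ x = ψᵢ₊₁⁻ x + 1`; an attribute `x` of the vertex would thus yield a
strictly decreasing sequence of natural numbers. A separable Chu space without attributes has at
most one point, so no cocone into it is injective on `ℕ⁺`.
-/

universe u

variable {S : Type u}

/-- The biextensional Chu space `(ℕ⁺, rᵢ, ℕ)` with `rᵢ a x = 1` iff `a ∣ (x + i)`
(indices shifted so that `i` ranges over `ℕ`). -/
def divChu (i : ℕ) : ChuSpace.{0} Bool :=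
  ⟨{n : ℕ // 0 < n}, ℕ, fun a x => decide (a.1 ∣ (x + i))⟩

/-- The connecting morphism `(id, x ↦ x + 1)`. -/
def divHom (i : ℕ) : ChuHom (divChu i) (divChu (i+1)) where
  f := fun a => a
  g := fun x : ℕ => (x + 1 : ℕ)
  comm := by
    show ∀ (a : {n : ℕ // 0 < n}) (x : ℕ),
      decide (a.1 ∣ (x + (i+1))) = decide (a.1 ∣ ((x + 1) + i))
    intro a x
    have h : x + (i+1) = (x + 1) + i := by omega
    rw [h]

def divSeq : ChuSeq Bool := ⟨divChu, divHom⟩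

namespace Nat

theorem dvd_of_forall_pos_dvd_imp {m n : ℕ} (h : ∀ d, 0 < d → d ∣ m → d ∣ n) : m ∣ n := by
  rcases m.eq_zero_or_pos with rfl | hm
  · have hn : n + 1 ∣ n := h (n + 1) n.succ_pos (dvd_zero _)
    rw [Nat.eq_zero_of_dvd_of_lt hn n.lt_succ_self]
  · exact h m hm dvd_rfl

theorem eq_of_forall_pos_dvd_iff {m n : ℕ} (h : ∀ d, 0 < d → (d ∣ m ↔ d ∣ n)) : m = n :=
  Nat.dvd_antisymm (dvd_of_forall_pos_dvd_imp fun d hd => (h d hd).mp)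
    (dvd_of_forall_pos_dvd_imp fun d hd => (h d hd).mpr)

/-- Two consecutive multiples of `a` above `N` already force `b ∣ a`. -/
theorem dvd_of_forall_le_dvd_imp {a b N : ℕ} (ha : 0 < a) (h : ∀ n, N ≤ n → a ∣ n → b ∣ n) :
    b ∣ a := by
  have hN : N ≤ a * (N + 1) := (Nat.le_succ N).trans (Nat.le_mul_of_pos_left _ ha)
  have h₁ : b ∣ a * (N + 1) := h _ hN (dvd_mul_right a _)
  have h₂ : b ∣ a * (N + 1) + a := h _ (hN.trans (Nat.le_add_right _ _)) (by
    rw [← mul_add_one]; exact dvd_mul_right a _)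
  exact (Nat.dvd_add_right h₁).mp h₂

end Nat

theorem divChu_extensional (i : ℕ) : ChuExtensional (divChu i) := by
  intro (x : ℕ) (y : ℕ) h
  have hdvd : ∀ d, 0 < d → (d ∣ x + i ↔ d ∣ y + i) := fun d hd => by
    simpa [divChu] using h ⟨d, hd⟩
  exact Nat.add_right_cancel (Nat.eq_of_forall_pos_dvd_iff hdvd)

theorem divChu_separable (i : ℕ) : ChuSeparable (divChu i) := by
  intro a b h
  have hdvd : ∀ n, i ≤ n → (a.1 ∣ n ↔ b.1 ∣ n) := fun n hn => by
    obtain ⟨x, rfl⟩ := Nat.exists_eq_add_of_le' hn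
    simpa [divChu] using h (show (divChu i).X from x)
  exact Subtype.ext <| Nat.dvd_antisymm
    (Nat.dvd_of_forall_le_dvd_imp b.2 fun n hn => (hdvd n hn).mpr)
    (Nat.dvd_of_forall_le_dvd_imp a.2 fun n hn => (hdvd n hn).mp)

theorem divChu_biextensional (i : ℕ) : ChuBiextensional (divChu i) :=
  ⟨divChu_extensional i, divChu_separable i⟩

theorem ChuSeparable.subsingleton_of_isEmpty {C : ChuSpace S} (hC : ChuSeparable C)
    [IsEmpty C.X] : Subsingleton C.A :=
  ⟨fun a b => hC a b isEmptyElim⟩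

theorem Cocone.g_eq {T : ChuSeq S} {C : ChuSpace S} (c : Cocone T C) (i : ℕ) (x : C.X) :
    (c.ψ i).g x = (T.φ i).g ((c.ψ (i + 1)).g x) :=
  (congrFun (congrArg ChuHom.g (c.compat i)) x).symm

theorem isEmpty_X_of_cocone_divSeq {C : ChuSpace.{0} Bool} (c : Cocone divSeq C) : IsEmpty C.X := by
  refine ⟨fun x => not_strictAnti_of_wellFoundedLT (fun i => ((c.ψ i).g x : ℕ)) ?_⟩
  exact strictAnti_nat_of_succ_lt fun i => (c.g_eq i x).symm ▸ Nat.lt_succ_self _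

theorem not_subsingleton_divChu_A (i : ℕ) : ¬ Subsingleton (divChu i).A := fun h =>
  absurd (congrArg Subtype.val (h.elim (⟨1, one_pos⟩ : {n : ℕ // 0 < n}) ⟨2, two_pos⟩))
    (by decide)

theorem not_exists_monoE_cocone_divSeq :
    ¬ ∃ (C : ChuSpace.{0} Bool) (c : Cocone divSeq C),
      ChuBiextensional C ∧ ∀ i, IsMonoE (c.ψ i) := by
  rintro ⟨C, c, ⟨-, hsep⟩, hmono⟩
  have := isEmpty_X_of_cocone_divSeq c
  have := hsep.subsingleton_of_isEmpty
  exact not_subsingleton_divChu_A 0 (hmono 0).subsingleton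

/-- An ω-sequence of infinite biextensional Chu spaces with no colimit in `iB`:
every cocone from the divisibility sequence has an empty attribute set at its vertex,
hence there is no cocone in `iB` (to a biextensional space, with monic morphisms)
and no colimit in `iB`. -/
theorem stmt14 :
    (∀ i, ChuBiextensional (divChu i)) ∧
    (∀ (C : ChuSpace.{0} Bool) (_ : Cocone divSeq C), IsEmpty C.X) ∧
    (¬ ∃ (C : ChuSpace.{0} Bool) (c : Cocone divSeq C),
      ChuBiextensional C ∧ ∀ i, IsMonoE (c.ψ i)) ∧
    (¬ ∃ (C : ChuSpace.{0} Bool) (c : Cocone divSeq C),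
      IsColimit ChuBiextensional (fun _ _ φ => IsMonoE φ) divSeq C c) :=
  ⟨divChu_biextensional, fun _ c => isEmpty_X_of_cocone_divSeq c, not_exists_monoE_cocone_divSeq,
    fun ⟨C, c, hcol⟩ => not_exists_monoE_cocone_divSeq ⟨C, c, hcol.obj, hcol.mor⟩⟩
end

section
/- If an ω-sequence in iB admits a cocone to some biextensional Chu space, then its colimit taken in iE is biextensional and is also the colimit of the sequence in iB. -/
universe u

variable {S : Type u}

/-- If an ω-sequence in `iB` admits a cocone to some biextensional Chu space, then any
colimit of the sequence taken in `iE` is biextensional and is also a colimit in `iB`. -/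
theorem stmt15 {S : Type u} (T : ChuSeq S)
    (hobj : ∀ i, ChuBiextensional (T.C i)) (hmor : ∀ i, IsMonoE (T.φ i))
    (hcone : ∃ (C₀ : ChuSpace S) (c₀ : Cocone T C₀),
      ChuBiextensional C₀ ∧ ∀ i, IsMonoE (c₀.ψ i))
    (C : ChuSpace S) (c : Cocone T C)
    (hcol : IsColimit ChuExtensional (fun _ _ φ => IsMonoE φ) T C c) :
    ChuBiextensional C ∧
      IsColimit ChuBiextensional (fun _ _ φ => IsMonoE φ) T C c := by
  obtain ⟨C₀, c₀, hC₀, hc₀⟩ := hcone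
  obtain ⟨μ, ⟨hμmono, _⟩, _⟩ := hcol.univ C₀ hC₀.1 c₀ hc₀
  have hsep : ChuSeparable C := by
    intro a b hab
    apply hμmono
    apply hC₀.2
    intro y
    rw [μ.comm, μ.comm, hab]
  have hbi : ChuBiextensional C := ⟨hcol.obj, hsep⟩
  refine ⟨hbi, ?_, hcol.mor, ?_⟩
  · exact hbi
  · intro C' hC' c' hc'
    exact hcol.univ C' hC'.1 c' hc'
end

section
/- An object F = (B, s, Y) is a finite object of the category iC if and only if B is a finite set and F is extensional. Moreover, in that case |Y| ≤ |Σ|^|B|. -/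
/-!
Sufficiency: in a colimit of `iC` every object already lives at some stage, so the finitely
many objects of `F` reach a common stage `N`; since the backward leg at `N` is onto, the
attribute map of `φ` factors through it exactly when `F` has no repeated columns.

Necessity: a Chu space is the colimit of the restrictions of its objects to an increasing
cover, so a finite object with infinitely many objects would have to be one of a strictly
increasing chain of proper restrictions. If two columns `y₀ ≠ y₁` of `F` coincide, let `C`
carry each column `y` of `F` in copies `(y, m, ε)`, `(m, ε) ∈ ℕ × Bool`, and let its `i`-th
approximation identify `(y, m, true)` with `(y, m, false)` for `m ≥ i`. The map `F → C`
sending `(y₀, m, true)` to `y₁` separates a pair that every stage identifies.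
-/

universe u

variable {S : Type u}

namespace ChuHom

variable {C D E G : ChuSpace S}

lemma comp_assoc (χ : ChuHom E G) (ψ : ChuHom D E) (φ : ChuHom C D) :
    (χ.comp ψ).comp φ = χ.comp (ψ.comp φ) :=
  rfl

lemma exists_comp_eq_of_range_subset {F : ChuSpace S} (χ : ChuHom D C) (φ : ChuHom F C)
    (hχ : Function.Surjective χ.g) (hF : ChuExtensional F)
    (hφ : Set.range φ.f ⊆ Set.range χ.f) : ∃ ψ : ChuHom F D, χ.comp ψ = φ := by
  choose pre hpre using fun b => hφ ⟨b, rfl⟩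
  choose sec hsec using hχ
  have hφg : ∀ x, φ.g (sec (χ.g x)) = φ.g x := fun x => hF _ _ fun b => by
    rw [← φ.comm, ← φ.comm, ← hpre, χ.comm, χ.comm, hsec]
  refine ⟨⟨pre, φ.g ∘ sec, fun b y => ?_⟩, ChuHom.ext (funext hpre) (funext hφg)⟩
  rw [Function.comp_apply, ← φ.comm, ← hpre, χ.comm, hsec]

end ChuHom

section IsMonoC

variable {C D E : ChuSpace S}

lemma isMonoC_idHom (C : ChuSpace S) : IsMonoC (ChuHom.idHom C) :=
  ⟨Function.injective_id, Function.surjective_id⟩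

lemma IsMonoC.comp {ψ : ChuHom D E} {φ : ChuHom C D} (hψ : IsMonoC ψ) (hφ : IsMonoC φ) :
    IsMonoC (ψ.comp φ) :=
  ⟨hψ.1.comp hφ.1, hφ.2.comp hψ.2⟩

lemma IsMonoC.of_comp {ψ : ChuHom D E} {φ : ChuHom C D} (h : IsMonoC (ψ.comp φ)) :
    IsMonoC φ :=
  ⟨Function.Injective.of_comp (f := ψ.f) h.1, Function.Surjective.of_comp (g := ψ.g) h.2⟩

end IsMonoC

abbrev IsColimitIC (T : ChuSeq S) (C : ChuSpace S) (c : Cocone T C) : Prop :=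
  IsColimit (fun _ => True) (fun _ _ φ => IsMonoC φ) T C c

abbrev FiniteObjIC (F : ChuSpace S) : Prop :=
  FiniteObjIn (fun _ => True) (fun _ _ φ => IsMonoC φ) F

namespace ChuSeq

def IsThread (T : ChuSeq S) (t : ∀ i, (T.C i).X) : Prop :=
  ∀ i, (T.φ i).g (t (i + 1)) = t i

def fwd (T : ChuSeq S) (i : ℕ) : ∀ k, (T.C i).A → (T.C (i + k)).A
  | 0 => id
  | k + 1 => (T.φ (i + k)).f ∘ T.fwd i k

end ChuSeq

namespace Cocone

variable {T : ChuSeq S} {C C' : ChuSpace S}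

lemma f_fwd (c : Cocone T C) (i k : ℕ) (a : (T.C i).A) :
    (c.ψ (i + k)).f (T.fwd i k a) = (c.ψ i).f a := by
  induction k with
  | zero => rfl
  | succ k ih => exact (congrArg (fun χ => χ.f (T.fwd i k a)) (c.compat (i + k))).trans ih

lemma range_f_mono (c : Cocone T C) {i j : ℕ} (h : i ≤ j) :
    Set.range (c.ψ i).f ⊆ Set.range (c.ψ j).f := by
  obtain ⟨k, rfl⟩ := Nat.exists_eq_add_of_le h
  rintro _ ⟨a, rfl⟩
  exact ⟨T.fwd i k a, c.f_fwd i k a⟩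

lemma f_eq_f_of_injective (c : Cocone T C) (c' : Cocone T C')
    (hc : ∀ i, Function.Injective (c.ψ i).f) {i j : ℕ} {a : (T.C i).A} {b : (T.C j).A}
    (h : (c.ψ i).f a = (c.ψ j).f b) : (c'.ψ i).f a = (c'.ψ j).f b := by
  wlog hij : i ≤ j generalizing i j a b
  · exact (this h.symm (le_of_not_ge hij)).symm
  obtain ⟨k, rfl⟩ := Nat.exists_eq_add_of_le hij
  obtain rfl : T.fwd i k a = b := hc _ ((c.f_fwd i k a).trans h)
  exact (c'.f_fwd i k a).symm

lemma isThread_g (c : Cocone T C) (x : C.X) : T.IsThread fun i => (c.ψ i).g x :=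
  fun i => congrArg (fun χ => χ.g x) (c.compat i)

lemma isMonoC_φ (c : Cocone T C) {i : ℕ} (h : IsMonoC (c.ψ i)) : IsMonoC (T.φ i) := by
  rw [← c.compat i] at h
  exact h.of_comp

end Cocone

theorem isColimitIC_of_threads {T : ChuSeq S} {C : ChuSpace S} (c : Cocone T C)
    (hmono : ∀ i, IsMonoC (c.ψ i))
    (hcover : ∀ a, ∃ i a', (c.ψ i).f a' = a)
    (hlim : ∀ t, T.IsThread t → ∃ x, ∀ i, (c.ψ i).g x = t i)
    (hdet : ∀ x, ∃ n, ∀ x', (c.ψ n).g x' = (c.ψ n).g x → x' = x) :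
    IsColimitIC T C c := by
  refine ⟨trivial, hmono, fun C' _ c' hc' => ?_⟩
  choose idx pre hpre using hcover
  choose lim hlim using fun x' => hlim _ (c'.isThread_g x')
  let μ : ChuHom C C' := ⟨fun a => (c'.ψ (idx a)).f (pre a), lim, fun a x' => by
    rw [(c'.ψ _).comm, ← hlim, ← (c.ψ _).comm, hpre]⟩
  have hμ : ∀ i, μ.comp (c.ψ i) = c'.ψ i := fun i =>
    ChuHom.ext (funext fun a => c.f_eq_f_of_injective c' (fun i => (hmono i).1) (hpre _))
      (funext fun x' => hlim x' i)
  refine ⟨μ, ⟨⟨fun a b hab => ?_, fun x => ?_⟩, hμ⟩,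
    fun μ' ⟨_, hμ'⟩ => ChuHom.ext ?_ ?_⟩
  · rw [← hpre a, ← hpre b]
    exact c'.f_eq_f_of_injective c (fun i => (hc' i).1) hab
  · obtain ⟨n, hn⟩ := hdet x
    obtain ⟨x', hx'⟩ := (hc' n).2 ((c.ψ n).g x)
    exact ⟨x', hn _ ((hlim x' n).trans hx')⟩
  · funext a
    exact (congrArg μ'.f (hpre a)).symm.trans (congrArg (fun χ => χ.f (pre a)) (hμ' (idx a)))
  · funext x'
    obtain ⟨n, hn⟩ := hdet (lim x')
    exact hn _ ((congrArg (fun χ => χ.g x') (hμ' n)).trans (hlim x' n).symm)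

namespace IsColimitIC

variable {T : ChuSeq S} {C C' : ChuSpace S} {c : Cocone T C}

lemma hom_ext (h : IsColimitIC T C c) {μ₁ μ₂ : ChuHom C C'}
    (h₁ : IsMonoC μ₁) (h₂ : IsMonoC μ₂) (hμ : ∀ i, μ₁.comp (c.ψ i) = μ₂.comp (c.ψ i)) :
    μ₁ = μ₂ := by
  let c' : Cocone T C' :=
    ⟨fun i => μ₂.comp (c.ψ i), fun i => by rw [ChuHom.comp_assoc, c.compat]⟩
  obtain ⟨μ, -, hμuniq⟩ := h.univ C' trivial c' fun i => h₂.comp (h.mor i)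
  exact (hμuniq μ₁ ⟨h₁, hμ⟩).trans (hμuniq μ₂ ⟨h₂, fun _ => rfl⟩).symm

/-- The objects reached by the stages form a sub-space through which the whole cocone factors;
by uniqueness of mediating maps this sub-space is everything. -/
lemma exists_f_eq (h : IsColimitIC T C c) (a : C.A) : ∃ i a', (c.ψ i).f a' = a := by
  let C₀ : ChuSpace S := ⟨{a // ∃ i a', (c.ψ i).f a' = a}, C.X, fun a => C.r a.1⟩
  let ν : ChuHom C₀ C := ⟨Subtype.val, id, fun _ _ => rfl⟩
  let c₀ : Cocone T C₀ :=
    ⟨fun i => ⟨fun a' => ⟨(c.ψ i).f a', i, a', rfl⟩, (c.ψ i).g, (c.ψ i).comm⟩, fun i =>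
      ChuHom.ext (funext fun a' => Subtype.ext (congrArg (fun χ => χ.f a') (c.compat i)))
        (funext fun x => congrArg (fun χ => χ.g x) (c.compat i))⟩
  obtain ⟨μ, ⟨hμ, hμc⟩, -⟩ := h.univ C₀ trivial c₀ fun i =>
    ⟨fun _ _ hab => (h.mor i).1 (congrArg Subtype.val hab), (h.mor i).2⟩
  have hνμ : ν.comp μ = ChuHom.idHom C :=
    h.hom_ext ⟨Subtype.val_injective.comp hμ.1, hμ.2⟩ (isMonoC_idHom C) fun i => by
      rw [ChuHom.comp_assoc, hμc i]
      rfl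
  exact (μ.f a).2.imp fun _ => Exists.imp fun _ h => h.trans (congrArg (fun χ => χ.f a) hνμ)

lemma exists_range_subset (h : IsColimitIC T C c) {α : Type*} [Finite α] (f : α → C.A) :
    ∃ N, Set.range f ⊆ Set.range (c.ψ N).f := by
  choose idx a' ha' using fun x => h.exists_f_eq (f x)
  obtain ⟨N, hN⟩ := (Set.finite_range idx).bddAbove
  refine ⟨N, ?_⟩
  rintro _ ⟨x, rfl⟩
  exact c.range_f_mono (hN ⟨x, rfl⟩) ⟨a' x, ha' x⟩

end IsColimitIC

lemma FiniteObjIC.exists_comp_eq {F : ChuSpace S} (hF : FiniteObjIC F) {T : ChuSeq S}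
    {C : ChuSpace S} {c : Cocone T C} (hc : IsColimitIC T C c) (φ : ChuHom F C)
    (hφ : IsMonoC φ) :
    ∃ i, ∃ ψ : ChuHom F (T.C i), IsMonoC ψ ∧ (c.ψ i).comp ψ = φ :=
  hF.2 T (fun _ => trivial) (fun i => c.isMonoC_φ (hc.mor i)) C c hc φ hφ

theorem finiteObjIC_of_extensional {F : ChuSpace S} [Finite F.A] (hF : ChuExtensional F) :
    FiniteObjIC F := by
  refine ⟨trivial, fun T _ _ C c hc φ hφ => ?_⟩
  obtain ⟨N, hN⟩ := IsColimitIC.exists_range_subset hc φ.f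
  obtain ⟨ψ, hψ⟩ := (c.ψ N).exists_comp_eq_of_range_subset φ (hc.mor N).2 hF hN
  exact ⟨N, ψ, IsMonoC.of_comp (hψ ▸ hφ), hψ⟩

namespace ChuSpace

def restrict (F : ChuSpace S) (s : Set F.A) : ChuSpace S := ⟨s, F.X, fun a => F.r a⟩

variable (F : ChuSpace S) {s : ℕ → Set F.A}

def restrictSeq (hs : Monotone s) : ChuSeq S :=
  ⟨fun i => F.restrict (s i), fun i => ⟨Set.inclusion (hs i.le_succ), id, fun _ _ => rfl⟩⟩

def restrictCocone (hs : Monotone s) : Cocone (F.restrictSeq hs) F :=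
  ⟨fun _ => ⟨Subtype.val, id, fun _ _ => rfl⟩, fun _ => rfl⟩

lemma isColimitIC_restrictCocone (hs : Monotone s) (hcov : ∀ a, ∃ i, a ∈ s i) :
    IsColimitIC _ _ (F.restrictCocone hs) :=
  isColimitIC_of_threads _ (fun _ => ⟨Subtype.val_injective, Function.surjective_id⟩)
    (fun a => (hcov a).imp fun _ hi => ⟨⟨a, hi⟩, rfl⟩)
    (fun t ht => ⟨t 0, fun i => by
      induction i with
      | zero => rfl
      | succ i ih => exact ih.trans (ht i).symm⟩)
    (fun _ => ⟨0, fun _ => id⟩)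

end ChuSpace

lemma FiniteObjIC.exists_forall_mem {F : ChuSpace S} (hF : FiniteObjIC F) {s : ℕ → Set F.A}
    (hs : Monotone s) (hcov : ∀ a, ∃ i, a ∈ s i) : ∃ i, ∀ a, a ∈ s i := by
  obtain ⟨i, ψ, -, hψ⟩ :=
    hF.exists_comp_eq (F.isColimitIC_restrictCocone hs hcov) _ (isMonoC_idHom F)
  refine ⟨i, fun a => ?_⟩
  have ha : (ψ.f a).val = a := congrArg (fun χ => χ.f a) hψ
  exact ha ▸ (ψ.f a).2

theorem FiniteObjIC.finite {F : ChuSpace S} (hF : FiniteObjIC F) : Finite F.A := by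
  by_contra hinf
  have : Infinite F.A := not_finite_iff_infinite.mp hinf
  let e := Infinite.natEmbedding F.A
  obtain ⟨i, hi⟩ := hF.exists_forall_mem (s := fun i => {b | ∀ j, e j = b → j < i})
    (fun _ _ h _ hb j hj => (hb j hj).trans_le h) fun b => by
      by_cases hb : b ∈ Set.range e
      · obtain ⟨j, rfl⟩ := hb
        exact ⟨j + 1, fun j' h => Nat.lt_succ_of_le (e.injective h).le⟩
      · exact ⟨0, fun j h => (hb ⟨j, h⟩).elim⟩
  exact lt_irrefl i (hi (e i) i rfl)

def collapse (i : ℕ) (p : ℕ × Bool) : ℕ × Bool := (p.1, p.2 && decide (p.1 < i))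

@[simp]
lemma collapse_fst (i : ℕ) (p : ℕ × Bool) : (collapse i p).1 = p.1 :=
  rfl

lemma collapse_of_lt {i : ℕ} {p : ℕ × Bool} (h : p.1 < i) : collapse i p = p := by
  simp [collapse, h]

lemma collapse_collapse {i j : ℕ} (h : i ≤ j) (p : ℕ × Bool) :
    collapse i (collapse j p) = collapse i p := by
  by_cases hp : p.1 < i
  · simp [collapse, hp, hp.trans_le h]
  · simp [collapse, hp]

lemma collapse_eq_self_of_mem_range {i : ℕ} {p : ℕ × Bool}
    (hp : p ∈ Set.range (collapse i)) : collapse i p = p := by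
  obtain ⟨q, rfl⟩ := hp
  exact collapse_collapse le_rfl q

lemma exists_forall_collapse_eq {t : ∀ i, Set.range (collapse i)}
    (ht : ∀ i, collapse i (t (i + 1)) = t i) : ∃ p, ∀ i, collapse i p = t i := by
  have hle : ∀ i j, i ≤ j → collapse i (t j) = t i := fun i =>
    Nat.le_induction (collapse_eq_self_of_mem_range (t i).2) fun j hij ih => by
      rw [← collapse_collapse hij, ht j, ih]
  have hfst : ∀ j, (t j : ℕ × Bool).1 = (t 0 : ℕ × Bool).1 := fun j => by
    simpa using congrArg Prod.fst (hle 0 j j.zero_le)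
  refine ⟨t ((t 0 : ℕ × Bool).1 + 1), fun i => ?_⟩
  obtain ⟨j, hij, hj⟩ : ∃ j, i ≤ j ∧ (t 0 : ℕ × Bool).1 + 1 ≤ j :=
    ⟨_, le_max_left _ _, le_max_right _ _⟩
  rw [← hle _ j hj, collapse_of_lt ((hfst j).trans_lt (Nat.lt_succ_self _)), hle i j hij]

lemma eq_of_collapse_eq {p q : ℕ × Bool} (h : collapse (p.1 + 1) q = collapse (p.1 + 1) p) :
    q = p := by
  rw [collapse_of_lt p.1.lt_succ_self] at h
  have hq : q.1 = p.1 := by simpa using congrArg Prod.fst h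
  rwa [collapse_of_lt (hq.trans_lt p.1.lt_succ_self)] at h

namespace ChuSpace

abbrev withCopies (F : ChuSpace S) (P : Type) : ChuSpace S :=
  ⟨F.A, F.X × P, fun a x => F.r a x.1⟩

variable (F : ChuSpace S)

def copiesSeq : ChuSeq S :=
  ⟨fun i => F.withCopies (Set.range (collapse i)), fun i =>
    ⟨id, Prod.map id fun q => Set.rangeFactorization (collapse i) q, fun _ _ => rfl⟩⟩

def copiesCocone : Cocone F.copiesSeq (F.withCopies (ℕ × Bool)) :=
  ⟨fun i => ⟨id, Prod.map id (Set.rangeFactorization (collapse i)), fun _ _ => rfl⟩, fun i =>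
    ChuHom.ext rfl (funext fun _ => Prod.ext rfl (Subtype.ext (collapse_collapse i.le_succ _)))⟩

lemma isColimitIC_copiesCocone : IsColimitIC _ _ F.copiesCocone :=
  isColimitIC_of_threads _
    (fun _ => ⟨Function.injective_id, Function.surjective_id.prodMap
      Set.rangeFactorization_surjective⟩)
    (fun a => ⟨0, a, rfl⟩)
    (fun t ht => by
      obtain ⟨p, hp⟩ := exists_forall_collapse_eq (t := fun i => (t i).2)
        fun i => congrArg (fun x => (x.2 : ℕ × Bool)) (ht i)
      refine ⟨((t 0).1, p), fun i => Prod.ext ?_ (Subtype.ext (hp i))⟩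
      induction i with
      | zero => rfl
      | succ i ih => exact ih.trans (congrArg Prod.fst (ht i)).symm)
    (fun x => ⟨x.2.1 + 1, fun _ h => by
      obtain ⟨h₁, h₂⟩ := Prod.ext_iff.mp h
      exact Prod.ext h₁ (eq_of_collapse_eq (congrArg Subtype.val h₂))⟩)

end ChuSpace

theorem FiniteObjIC.extensional {F : ChuSpace S} (hF : FiniteObjIC F) : ChuExtensional F := by
  intro y₀ y₁ hcol
  classical
  let φ : ChuHom F (F.withCopies (ℕ × Bool)) :=
    ⟨id, fun x => if x.2.2 ∧ x.1 = y₀ then y₁ else x.1, fun a x => by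
      split_ifs with h
      · exact (congrArg (F.r a) h.2).trans (hcol a)
      · rfl⟩
  have hφ : IsMonoC φ := ⟨Function.injective_id, fun y => ⟨(y, (0, false)), by simp [φ]⟩⟩
  obtain ⟨i, ψ, -, hψ⟩ := hF.exists_comp_eq F.isColimitIC_copiesCocone φ hφ
  have hφg : ∀ x, φ.g x = ψ.g ((F.copiesCocone.ψ i).g x) := fun x =>
    congrArg (fun χ => χ.g x) hψ.symm
  calc y₀ = φ.g (y₀, (i, false)) := by simp [φ]
    _ = φ.g (y₀, (i, true)) := by
      rw [hφg, hφg]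
      have hcoll : collapse i (i, false) = collapse i (i, true) := by simp [collapse]
      exact congrArg ψ.g (Prod.ext rfl (Subtype.ext hcoll))
    _ = y₁ := by simp [φ]

lemma ChuExtensional.mk_X_le {F : ChuSpace S} (h : ChuExtensional F) :
    Cardinal.mk F.X ≤ Cardinal.mk S ^ Cardinal.mk F.A := by
  rw [Cardinal.power_def]
  exact Cardinal.mk_le_of_injective fun x y hxy => h x y fun a => congrFun hxy a

theorem stmt16_general {S : Type u} (F : ChuSpace S) :
    (FiniteObjIn (fun _ => True) (fun _ _ φ => IsMonoC φ) F ↔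
      (Finite F.A ∧ ChuExtensional F)) ∧
    (FiniteObjIn (fun _ => True) (fun _ _ φ => IsMonoC φ) F →
      Cardinal.mk F.X ≤ Cardinal.mk S ^ Cardinal.mk F.A) := by
  have hiff : FiniteObjIC F ↔ Finite F.A ∧ ChuExtensional F :=
    ⟨fun hF => ⟨hF.finite, hF.extensional⟩,
      fun ⟨_, hext⟩ => finiteObjIC_of_extensional hext⟩
  exact ⟨hiff, fun hF => (hiff.mp hF).2.mk_X_le⟩

/-- `F = (B, s, Y)` is a finite object of `iC` iff `B` is finite and `F` is
extensional; in that case `|Y| ≤ |S| ^ |B|`. -/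
theorem stmt16 {S : Type u} (h2 : ∃ σ τ : S, σ ≠ τ) (F : ChuSpace S) :
    (FiniteObjIn (fun _ => True) (fun _ _ φ => IsMonoC φ) F ↔
      (Finite F.A ∧ ChuExtensional F)) ∧
    (FiniteObjIn (fun _ => True) (fun _ _ φ => IsMonoC φ) F →
      Cardinal.mk F.X ≤ Cardinal.mk S ^ Cardinal.mk F.A) :=
  stmt16_general F
end

section
/- If F = (B, s, Y) is a finite object in the category iE of extensional Chu spaces with monic morphisms, then the object set B is finite. The converse fails: a finite object of iE must moreover be discrete, i.e., F = (B,s,Y) is a finite object of iE if and only if B is finite and for every function f : B → Σ there exists y ∈ Y with f = s(-,y). -/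
universe u

variable {S : Type u}

/-!
A cocone in `iE` whose points are the union of the stages and whose attributes are their limit
is a colimit, and the points of any colimit are covered by the stages. So if `F` has finitely
many points, a monic `F → colim` lands in a single stage, and discreteness of `F` supplies the
attributes needed to factor it there. Conversely, a finite object `F` is tested against two chains
whose colimit contains `F`: an exhaustion of an infinite `F` by restrictions, none of which
contains all of `F`, and a chain whose stage `i` carries, for every `h : F.A → S`, an attribute
realizing `h` that has disappeared from the colimit.
-/

abbrev IsColimitIE (T : ChuSeq S) (C : ChuSpace S) (c : Cocone T C) : Prop :=
  IsColimit ChuExtensional (fun _ _ φ => IsMonoE φ) T C c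

abbrev FiniteObjIE (F : ChuSpace S) : Prop :=
  FiniteObjIn ChuExtensional (fun _ _ φ => IsMonoE φ) F

lemma ChuHom.comp_assoc_s17 {C D E G : ChuSpace S} (χ : ChuHom E G) (ψ : ChuHom D E)
    (φ : ChuHom C D) : (χ.comp ψ).comp φ = χ.comp (ψ.comp φ) := rfl

def ChuSeq.push (T : ChuSeq S) (i : ℕ) : ∀ k, (T.C i).A → (T.C (i + k)).A
  | 0 => id
  | k + 1 => (T.φ (i + k)).f ∘ T.push i k

namespace Cocone

variable {T : ChuSeq S} {C : ChuSpace S} (c : Cocone T C)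

lemma f_succ (i : ℕ) (z : (T.C i).A) : (c.ψ (i + 1)).f ((T.φ i).f z) = (c.ψ i).f z :=
  congrFun (congrArg ChuHom.f (c.compat i)) z

lemma g_succ (i : ℕ) (x : C.X) : (T.φ i).g ((c.ψ (i + 1)).g x) = (c.ψ i).g x :=
  congrFun (congrArg ChuHom.g (c.compat i)) x

lemma f_push (i k : ℕ) (z : (T.C i).A) : (c.ψ (i + k)).f (T.push i k z) = (c.ψ i).f z := by
  induction k with
  | zero => rfl
  | succ k ih => exact (c.f_succ (i + k) _).trans ih

lemma exists_f_eq_of_le {i j : ℕ} (hij : i ≤ j) (z : (T.C i).A) :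
    ∃ w, (c.ψ j).f w = (c.ψ i).f z := by
  obtain ⟨k, rfl⟩ := Nat.exists_eq_add_of_le hij
  exact ⟨T.push i k z, c.f_push i k z⟩

lemma f_eq_of_f_eq {C' : ChuSpace S} (c' : Cocone T C')
    (hinj : ∀ i, Function.Injective (c.ψ i).f)
    {i j : ℕ} {z : (T.C i).A} {w : (T.C j).A} (h : (c.ψ i).f z = (c.ψ j).f w) :
    (c'.ψ i).f z = (c'.ψ j).f w := by
  have of_le : ∀ {i j : ℕ} {z : (T.C i).A} {w : (T.C j).A}, i ≤ j →
      (c.ψ i).f z = (c.ψ j).f w → (c'.ψ i).f z = (c'.ψ j).f w := by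
    intro i j z w hij h
    obtain ⟨k, rfl⟩ := Nat.exists_eq_add_of_le hij
    rw [← hinj (i + k) ((c.f_push i k z).trans h), c'.f_push]
  rcases le_total i j with hij | hji
  · exact of_le hij h
  · exact (of_le hji h.symm).symm

end Cocone

lemma isColimitIE_of_union_of_limit {T : ChuSeq S} {C : ChuSpace S} (c : Cocone T C)
    (hext : ChuExtensional C) (hinj : ∀ i, Function.Injective (c.ψ i).f)
    (hunion : ∀ a, ∃ i z, (c.ψ i).f z = a)
    (hlim : ∀ x : ∀ i, (T.C i).X, (∀ i, (T.φ i).g (x (i + 1)) = x i) →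
      ∃! y : C.X, ∀ i, (c.ψ i).g y = x i) :
    IsColimitIE T C c := by
  refine ⟨hext, hinj, fun C' _ c' hc' => ?_⟩
  choose st z hz using (hunion ·)
  choose μg hμg hμg_uniq using fun x : C'.X => hlim (fun i => (c'.ψ i).g x) (c'.g_succ · x)
  have hμf : ∀ i w, (c'.ψ (st ((c.ψ i).f w))).f (z _) = (c'.ψ i).f w :=
    fun i w => c.f_eq_of_f_eq c' hinj (hz _)
  have comm : ∀ a x, C'.r ((c'.ψ (st a)).f (z a)) x = C.r a (μg x) := by
    intro a x
    obtain ⟨i, w, rfl⟩ := hunion a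
    rw [hμf, (c'.ψ i).comm, ← hμg x i, (c.ψ i).comm]
  refine ⟨⟨fun a => (c'.ψ (st a)).f (z a), μg, comm⟩, ⟨?_, fun i => ?_⟩, ?_⟩
  · intro a a' h
    rw [← hz a, ← hz a']
    exact c'.f_eq_of_f_eq c hc' h
  · exact ChuHom.ext (funext (hμf i)) (funext fun x => hμg x i)
  · rintro ν ⟨-, hν⟩
    refine ChuHom.ext (funext fun a => ?_) (funext fun x => hμg_uniq x _ fun i => ?_)
    · obtain ⟨i, w, rfl⟩ := hunion a
      exact (congrFun (congrArg ChuHom.f (hν i)) w).trans (hμf i w).symm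
    · exact congrFun (congrArg ChuHom.g (hν i)) x

/-- Otherwise the cocone would factor through the subspace of covered points, and the universal
property would force the inclusion of that subspace to be the identity. -/
lemma IsColimitIE.exists_f_eq {T : ChuSeq S} (hT : ∀ i, ChuExtensional (T.C i))
    {C : ChuSpace S} {c : Cocone T C} (hc : IsColimitIE T C c) (a : C.A) :
    ∃ i z, (c.ψ i).f z = a := by
  let Im := {a : C.A // ∃ i z, (c.ψ i).f z = a}
  let agree (x x' : C.X) : Prop := ∀ p : Im, C.r p.1 x = C.r p.1 x'
  let I : ChuSpace S := ⟨Im, Quot agree, fun p => Quot.lift (C.r p.1) fun _ _ h => h p⟩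
  have hI : ChuExtensional I := by
    rintro ⟨x⟩ ⟨x'⟩ h
    exact Quot.sound h
  let ι : ChuHom I C := ⟨Subtype.val, Quot.mk agree, fun _ _ => rfl⟩
  let d : Cocone T I :=
    ⟨fun i => ⟨fun z => ⟨(c.ψ i).f z, i, z, rfl⟩,
      Quot.lift (c.ψ i).g fun x x' h => hT i _ _ fun z => by
        simp only [← (c.ψ i).comm]
        exact h ⟨_, i, z, rfl⟩,
      fun z => by
        rintro ⟨x⟩
        exact (c.ψ i).comm z x⟩,
     fun i => ChuHom.ext (funext fun z => Subtype.ext (c.f_succ i z))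
       (funext <| by rintro ⟨x⟩; exact c.g_succ i x)⟩
  obtain ⟨μ, ⟨hμm, hμ⟩, -⟩ := hc.univ I hI d fun i _ _ h => hc.mor i (congrArg Subtype.val h)
  obtain ⟨ν, -, hν⟩ := hc.univ C hc.obj c hc.mor
  have hιμ : ι.comp μ = ChuHom.idHom C := by
    rw [hν (ι.comp μ) ⟨fun _ _ h => ?_, fun i => ?_⟩,
      ← hν (ChuHom.idHom C) ⟨fun _ _ h => h, fun _ => rfl⟩]
    · exact hμm (Subtype.ext h)
    · rw [ChuHom.comp_assoc_s17, hμ]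
      rfl
  have hμa : (μ.f a).1 = a := congrFun (congrArg ChuHom.f hιμ) a
  exact hμa ▸ (μ.f a).2

lemma IsColimitIE.exists_stage_of_finite {T : ChuSeq S} (hT : ∀ i, ChuExtensional (T.C i))
    {C : ChuSpace S} {c : Cocone T C} (hc : IsColimitIE T C c) {ι : Type*} [Finite ι]
    (a : ι → C.A) : ∃ i, ∀ k, ∃ z, (c.ψ i).f z = a k := by
  choose st z hz using fun k => hc.exists_f_eq hT (a k)
  obtain ⟨i, hi⟩ := (Set.finite_range st).bddAbove
  refine ⟨i, fun k => ?_⟩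
  obtain ⟨w, hw⟩ := c.exists_f_eq_of_le (hi ⟨k, rfl⟩) (z k)
  exact ⟨w, hw.trans (hz k)⟩

lemma finiteObjIE_of_finite_of_discrete {F : ChuSpace S} (hext : ChuExtensional F)
    (hfin : Finite F.A) (hdisc : ChuDiscrete F) : FiniteObjIE F := by
  refine ⟨hext, fun T hT _ C c hc φ hφ => ?_⟩
  obtain ⟨i, hi⟩ := IsColimitIE.exists_stage_of_finite hT hc φ.f
  choose zf hzf using hi
  choose yg hyg using fun u : (T.C i).X => hdisc fun b => (T.C i).r (zf b) u
  refine ⟨i, ⟨zf, yg, fun b u => (hyg u b).symm⟩, ?_, ChuHom.ext (funext hzf) ?_⟩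
  · have hcomp : (c.ψ i).f ∘ zf = φ.f := funext hzf
    exact Function.Injective.of_comp (f := (c.ψ i).f) (by rwa [hcomp])
  · funext x
    refine hext _ _ fun b => ?_
    change F.r b (yg ((c.ψ i).g x)) = F.r b (φ.g x)
    rw [hyg, ← (c.ψ i).comm, hzf, φ.comm]

namespace ChuSpace

section RestrictPad

variable (σ τ : S) (F : ChuSpace S)

/-- The extra points `inr y` (value `τ` at `y`, `σ` elsewhere) keep the restriction of `F` to
`P` extensional whatever `P` is. -/
noncomputable def restrictPad (P : F.A → Prop) : ChuSpace S :=
  ⟨{b // P b} ⊕ F.X, F.X, fun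
    | .inl b, y => F.r b y
    | .inr y', y => open Classical in if y' = y then τ else σ⟩

variable {σ τ F}

lemma restrictPad_extensional (hστ : σ ≠ τ) (P : F.A → Prop) :
    ChuExtensional (F.restrictPad σ τ P) := by
  classical
  intro x y h
  by_contra hxy
  have hx : (if x = x then τ else σ) = if x = y then τ else σ := h (.inr x)
  rw [if_pos rfl, if_neg hxy] at hx
  exact hστ hx.symm

def restrictPadIncl {P Q : F.A → Prop} (hPQ : ∀ b, P b → Q b) :
    ChuHom (F.restrictPad σ τ P) (F.restrictPad σ τ Q) :=
  ⟨Sum.map (Subtype.map id hPQ) id, id, by rintro (_ | _) _ <;> rfl⟩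

lemma restrictPadIncl_injective {P Q : F.A → Prop} (hPQ : ∀ b, P b → Q b) :
    Function.Injective (F.restrictPadIncl (σ := σ) (τ := τ) hPQ).f :=
  (Subtype.map_injective hPQ Function.injective_id).sumMap Function.injective_id

variable (σ τ F)

noncomputable def restrictPadSeq (P : ℕ → F.A → Prop) (hP : ∀ i b, P i b → P (i + 1) b) :
    ChuSeq S :=
  ⟨fun i => F.restrictPad σ τ (P i), fun i => restrictPadIncl (hP i)⟩

noncomputable def restrictPadCocone (P : ℕ → F.A → Prop) (hP : ∀ i b, P i b → P (i + 1) b) :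
    Cocone (F.restrictPadSeq σ τ P hP) (F.restrictPad σ τ fun _ => True) :=
  ⟨fun _ => restrictPadIncl fun _ _ => trivial,
    fun _ => ChuHom.ext (funext (by rintro (_ | _) <;> rfl)) rfl⟩

variable {σ τ F}

lemma isColimitIE_restrictPadCocone (hστ : σ ≠ τ) (P : ℕ → F.A → Prop)
    (hP : ∀ i b, P i b → P (i + 1) b) (hcover : ∀ b, ∃ i, P i b) :
    IsColimitIE _ _ (F.restrictPadCocone σ τ P hP) := by
  refine isColimitIE_of_union_of_limit _ (restrictPad_extensional hστ _)
    (fun _ => restrictPadIncl_injective _) ?_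
    fun x hx => ⟨x 0, fun i => ?_, fun y hy => hy 0⟩
  · rintro (⟨b, -⟩ | y)
    · obtain ⟨i, hi⟩ := hcover b
      exact ⟨i, .inl ⟨b, hi⟩, rfl⟩
    · exact ⟨0, .inr y, rfl⟩
  · induction i with
    | zero => rfl
    | succ i ih => exact ih.trans (hx i).symm

end RestrictPad

section Tagged

variable (σ τ : S) (F : ChuSpace S)

/-- Points of `F` plus points `n : ℕ`; attributes of `F` plus, for each `h : F.A → S` and
`k : ℕ`, an attribute extending `h` by the value `τ` at `k` and `σ` at the other new points. -/
noncomputable def taggedR : F.A ⊕ ULift.{u} ℕ → F.X ⊕ (F.A → S) × ULift.{u} ℕ → S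
  | .inl b, .inl y => F.r b y
  | .inl b, .inr p => p.1 b
  | .inr _, .inl _ => σ
  | .inr n, .inr p => open Classical in if n = p.2 then τ else σ

abbrev TaggedAttr (i : ℕ) : Type u :=
  F.X ⊕ {p : (F.A → S) × ULift.{u} ℕ // i ≤ p.2.down}

def TaggedAttr.val {i : ℕ} : F.TaggedAttr i → F.X ⊕ (F.A → S) × ULift.{u} ℕ :=
  Sum.map id Subtype.val

noncomputable def tagged (i : ℕ) : ChuSpace S :=
  ⟨F.A ⊕ ULift.{u} ℕ, F.TaggedAttr i, fun a x => F.taggedR σ τ a (TaggedAttr.val F x)⟩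

noncomputable def taggedLimit : ChuSpace S :=
  ⟨F.A ⊕ ULift.{u} ℕ, F.X, fun a y => F.taggedR σ τ a (.inl y)⟩

noncomputable def taggedSeq : ChuSeq S :=
  ⟨F.tagged σ τ, fun _ =>
    ⟨id, Sum.map id fun p => ⟨p.1, Nat.le_of_succ_le p.2⟩, by rintro _ (_ | _) <;> rfl⟩⟩

noncomputable def taggedCocone : Cocone (F.taggedSeq σ τ) (F.taggedLimit σ τ) :=
  ⟨fun _ => ⟨id, .inl, fun _ _ => rfl⟩, fun _ => rfl⟩

variable {σ τ F}

lemma tagged_extensional (hστ : σ ≠ τ) (hext : ChuExtensional F) (i : ℕ) :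
    ChuExtensional (F.tagged σ τ i) := by
  classical
  have hτ : ∀ (n : ULift.{u} ℕ) (q : {p : (F.A → S) × ULift.{u} ℕ // i ≤ p.2.down}),
      (F.tagged σ τ i).r (.inr n) (.inr q) = τ ↔ n = q.1.2 := by
    intro n q
    change (if n = q.1.2 then τ else σ) = τ ↔ _
    split_ifs with hn <;> simp [hn, hστ]
  rintro (y | p) (y' | q) h
  · exact congrArg Sum.inl (hext y y' fun b => h (.inl b))
  · exact (hστ ((h (.inr q.1.2)).trans ((hτ _ q).mpr rfl))).elim
  · exact (hστ ((h (.inr p.1.2)).symm.trans ((hτ _ p).mpr rfl))).elim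
  · have htag : p.1.2 = q.1.2 := (hτ _ q).mp ((h (.inr p.1.2)).symm.trans ((hτ _ p).mpr rfl))
    have hfun : p.1.1 = q.1.1 := funext fun b => h (.inl b)
    exact congrArg Sum.inr (Subtype.ext (Prod.ext hfun htag))

lemma taggedLimit_extensional (hext : ChuExtensional F) :
    ChuExtensional (F.taggedLimit σ τ) :=
  fun x y h => hext x y fun b => h (.inl b)

/-- A compatible family of attributes has a constant underlying value; a tagged value with tag
`k` is impossible, as it would be missing from stage `k + 1`. -/
lemma isColimitIE_taggedCocone (hext : ChuExtensional F) :
    IsColimitIE _ _ (F.taggedCocone σ τ) := by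
  refine isColimitIE_of_union_of_limit _ (taggedLimit_extensional hext)
    (fun _ => Function.injective_id) (fun a => ⟨0, a, rfl⟩) fun x hx => ?_
  have hval : ∀ i, TaggedAttr.val F (x i) = TaggedAttr.val F (x 0) := by
    intro i
    induction i with
    | zero => rfl
    | succ i ih => rw [← ih, ← hx i]; rcases x (i + 1) <;> rfl
  rcases h0 : x 0 with y | p
  · refine ⟨y, fun i => ?_, fun y' hy' => Sum.inl_injective ((hy' 0).trans h0)⟩
    have := hval i
    rw [h0] at this
    rcases hxi : x i with _ | _ <;> rw [hxi] at this <;> cases this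
    rfl
  · have := hval (p.1.2.down + 1)
    rw [h0] at this
    rcases hxi : x (p.1.2.down + 1) with _ | q <;> rw [hxi] at this
    · cases this
    · have htag := congrArg (·.2.down) (Sum.inr_injective this)
      have := q.2
      omega

end Tagged

def const (s : S) : ChuSpace S := ⟨PUnit, PUnit, fun _ _ => s⟩

end ChuSpace

/-- Removing from `F` the points `e j`, `j ≥ i`, of an injective sequence `e` gives an
exhausting chain of restrictions, and the embedding of `F` into its colimit cannot factor
through stage `i`, which misses `e i`. -/
lemma finite_A_of_finiteObjIE {σ τ : S} (hστ : σ ≠ τ) {F : ChuSpace S} (hF : FiniteObjIE F) :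
    Finite F.A := by
  by_contra hinf
  have := not_finite_iff_infinite.mp hinf
  set e := Infinite.natEmbedding F.A
  let P : ℕ → F.A → Prop := fun i b => ∀ j, i ≤ j → b ≠ e j
  have hP : ∀ i b, P i b → P (i + 1) b := fun i b hb j hj => hb j (Nat.le_of_succ_le hj)
  have hcover : ∀ b, ∃ i, P i b := by
    intro b
    by_cases hb : ∃ j, e j = b
    · obtain ⟨j, rfl⟩ := hb
      exact ⟨j + 1, fun k hk hjk => by have := e.injective hjk; omega⟩
    · exact ⟨0, fun j _ hj => hb ⟨j, hj.symm⟩⟩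
  let ι : ChuHom F (F.restrictPad σ τ fun _ => True) :=
    ⟨fun b => .inl ⟨b, trivial⟩, id, fun _ _ => rfl⟩
  obtain ⟨i, ψ, -, hψ⟩ := hF.2 (F.restrictPadSeq σ τ P hP)
    (fun _ => ChuSpace.restrictPad_extensional hστ _)
    (fun _ => ChuSpace.restrictPadIncl_injective _) _ _
    (ChuSpace.isColimitIE_restrictPadCocone hστ P hP hcover) ι
    (fun _ _ h => congrArg Subtype.val (Sum.inl_injective h))
  have hei : ((F.restrictPadCocone σ τ P hP).ψ i).f (ψ.f (e i)) = .inl ⟨e i, trivial⟩ :=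
    congrFun (congrArg ChuHom.f hψ) (e i)
  rcases hψe : ψ.f (e i) with ⟨b, hb⟩ | y <;> rw [hψe] at hei
  · exact hb i le_rfl (congrArg Subtype.val (Sum.inl_injective hei))
  · exact Sum.inr_ne_inl hei

lemma discrete_of_finiteObjIE {σ τ : S} (hστ : σ ≠ τ) {F : ChuSpace S} (hF : FiniteObjIE F) :
    ChuDiscrete F := by
  let ι : ChuHom F (F.taggedLimit σ τ) := ⟨.inl, id, fun _ _ => rfl⟩
  obtain ⟨i, ψ, -, hψ⟩ := hF.2 (F.taggedSeq σ τ) (ChuSpace.tagged_extensional hστ hF.1)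
    (fun _ => Function.injective_id) _ _ (ChuSpace.isColimitIE_taggedCocone hF.1) ι
    Sum.inl_injective
  intro h
  refine ⟨ψ.g (.inr ⟨(h, ⟨i⟩), le_rfl⟩), fun b => (ψ.comm b _).symm.trans ?_⟩
  rw [show ψ.f b = .inl b from congrFun (congrArg ChuHom.f hψ) b]
  rfl

/-- In `iE`: every finite object has finite object set; the converse fails; and an
extensional `F` is a finite object of `iE` iff its object set is finite and `F` is
discrete (every function `B → S` is realized by an attribute). -/
theorem stmt17 {S : Type u} (h2 : ∃ σ τ : S, σ ≠ τ) :
    (∀ F : ChuSpace S,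
      FiniteObjIn ChuExtensional (fun _ _ φ => IsMonoE φ) F → Finite F.A) ∧
    (∃ F : ChuSpace S, ChuExtensional F ∧ Finite F.A ∧
      ¬ FiniteObjIn ChuExtensional (fun _ _ φ => IsMonoE φ) F) ∧
    (∀ F : ChuSpace S, ChuExtensional F →
      (FiniteObjIn ChuExtensional (fun _ _ φ => IsMonoE φ) F ↔
        (Finite F.A ∧ ChuDiscrete F))) := by
  obtain ⟨σ, τ, hστ⟩ := h2
  have const_extensional : ChuExtensional (ChuSpace.const σ) := fun _ _ _ => rfl
  have const_not_discrete : ¬ ChuDiscrete (ChuSpace.const σ) := fun h =>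
    hστ ((h fun _ => τ).choose_spec PUnit.unit)
  refine ⟨fun F => finite_A_of_finiteObjIE hστ,
    ⟨ChuSpace.const σ, const_extensional, inferInstanceAs (Finite PUnit),
      fun hF => const_not_discrete (discrete_of_finiteObjIE hστ hF)⟩,
    fun F hext =>
      ⟨fun hF => ⟨finite_A_of_finiteObjIE hστ hF, discrete_of_finiteObjIE hστ hF⟩,
      fun ⟨hfin, hdisc⟩ => finiteObjIE_of_finite_of_discrete hext hfin hdisc⟩⟩
end
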